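/- arXiv:1705.02124 — 6 statements merged into one kernel-verified Lean document; each statement's English description precedes it below -/
import Mathlib

section
/- For every n ≥ 2, the demand graph D on the vertex set of K_{n,n} consisting of a bundle of n − 1 parallel edges joining two vertices of A and a bundle of n − 1 parallel edges joining two vertices of B (so e(D) = 2n − 2 and Δ(D) = n − 1 ≤ n) is not realizable in K_{n,n}. Hence the bound 2n − 3 on the number of demand edges in the edge version of the realizability theorem is sharp. -/
/-- A realization of the demand multigraph given by the indexed family of (ordered) endpoint
pairs `f` in the base graph `G`: pairwise edge-disjoint paths, one per demand edge. -/
def IsRealizable {V : Type*} (G : SimpleGraph V) {ι : Type*} (f : ι → V × V) : Prop :=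
  ∃ P : ∀ i : ι, G.Walk (f i).1 (f i).2,
    (∀ i, (P i).IsPath) ∧
    ∀ i j, i ≠ j → ∀ e, e ∈ (P i).edges → e ∉ (P j).edges

open SimpleGraph Walk in
private lemma card_contra {n : ℕ} (c : Fin (n - 1) → Fin n) (x y : Fin n) (hxy : x ≠ y)
    (hcx : ∀ i, c i ≠ x) (hcy : ∀ i, c i ≠ y) (hcinj : Function.Injective c) : False := by
  have hinj : Function.Injective (Sum.elim c ![x, y] : Fin (n - 1) ⊕ Fin 2 → Fin n) := by
    rintro (i | i) (j | j) h <;> simp only [Sum.elim_inl, Sum.elim_inr] at h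
    · exact congrArg Sum.inl (hcinj h)
    · fin_cases j <;> simp_all
    · fin_cases i <;>
        simp only [Matrix.cons_val_zero, Matrix.cons_val_one, Matrix.head_cons] at h
      exacts [absurd h.symm (hcx j), absurd h.symm (hcy j)]
    · fin_cases i <;> fin_cases j <;> simp_all
  have hcard := Fintype.card_le_of_injective _ hinj
  simp [Fintype.card_sum] at hcard
  omega

open SimpleGraph Walk in
private lemma key {n : ℕ} {a a' b b' : Fin n} (ha : a ≠ a')
    (A : ∀ _ : Fin (n - 1),
      (completeBipartiteGraph (Fin n) (Fin n)).Walk (Sum.inl a) (Sum.inl a'))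
    {Q : (completeBipartiteGraph (Fin n) (Fin n)).Walk (Sum.inr b) (Sum.inr b')}
    (hQ : Q.IsPath)
    (hdisjA : ∀ i j, i ≠ j → ∀ e ∈ (A i).edges, e ∉ (A j).edges)
    (hdisjAQ : ∀ i, ∀ e ∈ (A i).edges, e ∉ Q.edges)
    (hadj : (completeBipartiteGraph (Fin n) (Fin n)).Adj (Sum.inr b) (Sum.inl a))
    (Q' : (completeBipartiteGraph (Fin n) (Fin n)).Walk (Sum.inl a) (Sum.inr b'))
    (hQeq : Q = Walk.cons hadj Q') : False := by
  obtain ⟨z, hadj2, Q'', hQ'eq⟩ := Q'.exists_eq_cons_of_ne (by simp)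
  obtain ⟨d, rfl⟩ : ∃ d, z = Sum.inr d := by
    cases z with
    | inl _ => simp at hadj2
    | inr d => exact ⟨d, rfl⟩
  subst hQ'eq
  subst hQeq
  have he0 : s(Sum.inr b, Sum.inl a) ∈ (Walk.cons hadj (Walk.cons hadj2 Q'')).edges := by simp
  have he1 : s(Sum.inl a, Sum.inr d) ∈ (Walk.cons hadj (Walk.cons hadj2 Q'')).edges := by simp
  have hbd : b ≠ d := by
    rw [Walk.cons_isPath_iff] at hQ
    intro h
    subst h
    exact hQ.2 (by simp [Walk.support_cons, Walk.start_mem_support])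
  have hc : ∀ i, ∃ c : Fin n, s(Sum.inl a, Sum.inr c) ∈ (A i).edges := by
    intro i
    obtain ⟨x, hadjx, A', hAeq⟩ := (A i).exists_eq_cons_of_ne (by simp [ha])
    obtain ⟨c, rfl⟩ : ∃ c, x = Sum.inr c := by
      cases x with
      | inl _ => simp at hadjx
      | inr c => exact ⟨c, rfl⟩
    exact ⟨c, by rw [hAeq]; simp⟩
  choose c hcmem using hc
  apply card_contra c b d hbd
  · intro i h
    apply hdisjAQ i _ (hcmem i)
    rw [h]
    simpa [Sym2.eq_swap] using he0
  · intro i h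
    apply hdisjAQ i _ (hcmem i)
    rw [h]
    exact he1
  · intro i j h
    by_contra hne
    have hj := hcmem j
    rw [← h] at hj
    exact hdisjA i j hne _ (hcmem i) hj

/-- For every `n ≥ 2`, the demand multigraph consisting of a bundle of `n - 1` parallel edges
joining two vertices of `A` and a bundle of `n - 1` parallel edges joining two vertices of `B`
(it has `2n - 2` edges and maximum degree `n - 1`) is not realizable in `K_{n,n}`.
Hence the bound `2n - 3` on the number of demand edges is sharp. -/
theorem not_realizable_two_bundles (n : ℕ) (hn : 2 ≤ n)
    (a₁ a₂ b₁ b₂ : Fin n) (ha : a₁ ≠ a₂) (hb : b₁ ≠ b₂) :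
    ¬ IsRealizable (completeBipartiteGraph (Fin n) (Fin n))
        (Sum.elim
          (fun _ : Fin (n - 1) =>
            ((Sum.inl a₁ : Fin n ⊕ Fin n), (Sum.inl a₂ : Fin n ⊕ Fin n)))
          (fun _ : Fin (n - 1) =>
            ((Sum.inr b₁ : Fin n ⊕ Fin n), (Sum.inr b₂ : Fin n ⊕ Fin n)))) := by
  rintro ⟨P, hpath, hdisj⟩
  have hdisjA : ∀ i j : Fin (n - 1), i ≠ j →
      ∀ e ∈ (P (Sum.inl i)).edges, e ∉ (P (Sum.inl j)).edges := by
    intro i j hne e he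
    exact hdisj (Sum.inl i) (Sum.inl j) (by simpa using hne) e he
  have hstep : ∀ j : Fin (n - 1), ∃ d : Fin n, d ≠ a₁ ∧ d ≠ a₂ ∧
      s(Sum.inr b₁, Sum.inl d) ∈ (P (Sum.inr j)).edges := by
    intro j
    obtain ⟨y, hadj, Q', hQeq⟩ :=
      (P (Sum.inr j)).exists_eq_cons_of_ne (by simp [hb])
    obtain ⟨d, rfl⟩ : ∃ d, y = Sum.inl d := by
      cases y with
      | inl d => exact ⟨d, rfl⟩
      | inr _ => simp at hadj
    refine ⟨d, ?_, ?_, ?_⟩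
    · rintro rfl
      exact key ha (fun i => P (Sum.inl i)) (hpath (Sum.inr j)) hdisjA
        (fun i e he => hdisj (Sum.inl i) (Sum.inr j) (by simp) e he) hadj Q' hQeq
    · rintro rfl
      refine key ha.symm (fun i => (P (Sum.inl i)).reverse) (hpath (Sum.inr j))
        ?_ ?_ hadj Q' hQeq
      · intro i i' hne e he
        replace he : e ∈ (P (Sum.inl i)).edges :=
          List.mem_reverse.1 (by rw [← SimpleGraph.Walk.edges_reverse]; exact he)
        intro h'
        exact hdisjA i i' hne e he
          (List.mem_reverse.1 (by rw [← SimpleGraph.Walk.edges_reverse]; exact h'))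
      · intro i e he
        replace he : e ∈ (P (Sum.inl i)).edges :=
          List.mem_reverse.1 (by rw [← SimpleGraph.Walk.edges_reverse]; exact he)
        exact hdisj (Sum.inl i) (Sum.inr j) (by simp) e he
    · rw [hQeq]
      exact List.mem_cons.2 (Or.inl rfl)
  choose d hd1 hd2 hd3 using hstep
  apply card_contra d a₁ a₂ ha hd1 hd2
  intro j j' h
  by_contra hne
  have hj := hd3 j'
  rw [← h] at hj
  exact hdisj (Sum.inr j) (Sum.inr j') (by simpa using hne) _ (hd3 j) hj
end

section
/- For every n ≥ 1, the demand graph D on the vertex set of K_{n,n} containing exactly ⌈n/3⌉ + 1 parallel copies of the edge {a_i, b_i} for each i = 1,…,n is not realizable in K_{n,n}. (Indeed, among parallel demand edges between a vertex of A and a vertex of B, all but at most one must be realized by paths of length at least 3, and n·(3·⌈n/3⌉ + 1) > n² = e(K_{n,n}).) -/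
open SimpleGraph Finset


variable {n : ℕ}

private def par : Fin n ⊕ Fin n → ZMod 2 := Sum.elim (fun _ => 0) (fun _ => 1)

private lemma par_adj {x y : Fin n ⊕ Fin n}
    (h : (completeBipartiteGraph (Fin n) (Fin n)).Adj x y) : par y = par x + 1 := by
  rcases x with a | a <;> rcases y with b | b <;>
    simp [completeBipartiteGraph, par] at h ⊢ <;> decide

private lemma walk_par {u v : Fin n ⊕ Fin n}
    (w : (completeBipartiteGraph (Fin n) (Fin n)).Walk u v) :
    (w.length : ZMod 2) = par v - par u := by
  induction w with
  | nil => simp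
  | cons h p ih =>
    rw [Walk.length_cons]
    push_cast
    rw [ih, par_adj h]
    ring

private lemma length_odd {a b : Fin n}
    (w : (completeBipartiteGraph (Fin n) (Fin n)).Walk (Sum.inl a) (Sum.inr b)) :
    Odd w.length := by
  have h := walk_par w
  simp [par] at h
  rw [Nat.odd_iff]
  have h2 := Nat.mod_two_eq_zero_or_one w.length
  rcases h2 with h2 | h2
  · exfalso
    have : ((w.length : ℕ) : ZMod 2) = 0 := by
      have := (ZMod.natCast_eq_zero_iff w.length 2).mpr (Nat.dvd_of_mod_eq_zero h2)
      exact this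
    rw [h] at this
    exact one_ne_zero this
  · exact h2

private lemma edges_of_length_one {u v : Fin n ⊕ Fin n}
    (w : (completeBipartiteGraph (Fin n) (Fin n)).Walk u v) (h : w.length = 1) :
    s(u, v) ∈ w.edges := by
  cases w with
  | nil => simp at h
  | cons hadj w' =>
    cases w' with
    | nil => simp
    | cons h2 w2 => simp [Walk.length_cons] at h



/-- For every `n ≥ 1`, the demand multigraph containing exactly `⌈n/3⌉ + 1` parallel copies of
the edge `{aᵢ, bᵢ}` for each `i = 1, …, n` is not realizable in `K_{n,n}`.
(Here `⌈n/3⌉ = (n + 2) / 3` in natural division.) -/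
theorem not_realizable_diagonal_bundles (n : ℕ) (hn : 1 ≤ n) :
    ¬ IsRealizable (completeBipartiteGraph (Fin n) (Fin n))
        (fun p : Fin n × Fin ((n + 2) / 3 + 1) =>
          ((Sum.inl p.1 : Fin n ⊕ Fin n), (Sum.inr p.1 : Fin n ⊕ Fin n))) := by
  rintro ⟨P, hpath, hdisj⟩
  set t : Fin n × Fin ((n + 2) / 3 + 1) → Finset (Sym2 (Fin n ⊕ Fin n)) :=
    fun p => (P p).edges.toFinset with ht
  have hcard : ∀ p, (t p).card = (P p).length := by
    intro p
    rw [ht]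
    rw [List.toFinset_card_of_nodup (hpath p).isTrail.edges_nodup, Walk.length_edges]
  have hdis : ∀ p q : Fin n × Fin ((n + 2) / 3 + 1), p ≠ q → Disjoint (t p) (t q) := by
    intro p q hpq
    rw [Finset.disjoint_left]
    intro e hep heq
    exact hdisj p q hpq e (by simpa [ht] using hep) (by simpa [ht] using heq)
  have hsum_le : ∑ p : Fin n × Fin ((n + 2) / 3 + 1), (t p).card ≤ n * n := by
    have h1 : (univ.biUnion t).card = ∑ p, (t p).card :=
      Finset.card_biUnion (fun x _ y _ h => hdis x y h)
    have h2 : univ.biUnion t ⊆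
        (univ : Finset (Fin n × Fin n)).image (fun q => s(Sum.inl q.1, Sum.inr q.2)) := by
      intro e he
      simp only [Finset.mem_biUnion] at he
      obtain ⟨p, _, hep⟩ := he
      have hedge : e ∈ (completeBipartiteGraph (Fin n) (Fin n)).edgeSet :=
        (P p).edges_subset_edgeSet (by simpa [ht] using hep)
      induction e using Sym2.ind with
      | _ x y =>
        rcases x with a | a <;> rcases y with b | b
        · simp [mem_edgeSet] at hedge
        · exact Finset.mem_image.mpr ⟨(a, b), Finset.mem_univ _, rfl⟩
        · exact Finset.mem_image.mpr ⟨(b, a), Finset.mem_univ _, Sym2.eq_swap⟩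
        · simp [mem_edgeSet] at hedge
    calc ∑ p : Fin n × Fin ((n + 2) / 3 + 1), (t p).card = (univ.biUnion t).card := h1.symm
      _ ≤ ((univ : Finset (Fin n × Fin n)).image (fun q => s(Sum.inl q.1, Sum.inr q.2))).card :=
          Finset.card_le_card h2
      _ ≤ (univ : Finset (Fin n × Fin n)).card := Finset.card_image_le
      _ = n * n := by simp
  have hper : ∀ i : Fin n, n + 1 ≤ ∑ j : Fin ((n + 2) / 3 + 1), (P (i, j)).length := by
    intro i
    have hodd : ∀ j, Odd (P (i, j)).length := fun j => length_odd _
    by_cases hex : ∃ j₀ : Fin ((n + 2) / 3 + 1), (P (i, j₀)).length = 1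
    · obtain ⟨j₀, hj₀⟩ := hex
      have h3 : ∀ j ∈ Finset.univ.erase j₀, 3 ≤ (P (i, j)).length := by
        intro j hj
        obtain ⟨k, hk⟩ := hodd j
        rcases Nat.lt_or_ge (P (i, j)).length 3 with hl | hl
        · exfalso
          have hlen1 : (P (i, j)).length = 1 := by omega
          have e1 := edges_of_length_one _ hj₀
          have e2 := edges_of_length_one _ hlen1
          have hne : (i, j) ≠ (i, j₀) := by
            simp only [Finset.mem_erase] at hj
            simp [hj.1]
          exact hdisj (i, j) (i, j₀) hne _ e2 e1
        · exact hl
      have hsum' : (Finset.univ.erase j₀).card • 3 ≤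
          ∑ j ∈ Finset.univ.erase j₀, (P (i, j)).length :=
        Finset.card_nsmul_le_sum _ _ _ h3
      have hcarde : (Finset.univ.erase j₀).card = (n + 2) / 3 + 1 - 1 := by
        rw [Finset.card_erase_of_mem (Finset.mem_univ _)]
        simp
      have hall : (P (i, j₀)).length + ∑ j ∈ Finset.univ.erase j₀, (P (i, j)).length =
          ∑ j : Fin ((n + 2) / 3 + 1), (P (i, j)).length :=
        Finset.add_sum_erase Finset.univ (fun j => (P (i, j)).length) (Finset.mem_univ j₀)
      rw [hcarde, smul_eq_mul] at hsum'
      omega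
    · push_neg at hex
      have h3 : ∀ j ∈ (Finset.univ : Finset (Fin ((n + 2) / 3 + 1))), 3 ≤ (P (i, j)).length := by
        intro j _
        obtain ⟨k, hk⟩ := hodd j
        have := hex j
        omega
      have hsum' : (Finset.univ : Finset (Fin ((n + 2) / 3 + 1))).card • 3 ≤ ∑ j : Fin ((n + 2) / 3 + 1), (P (i, j)).length :=
        Finset.card_nsmul_le_sum _ _ _ h3
      simp only [Finset.card_univ, Fintype.card_fin, smul_eq_mul] at hsum'
      omega
  have htot : n * (n + 1) ≤ ∑ p : Fin n × Fin ((n + 2) / 3 + 1), (P p).length := by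
    rw [Fintype.sum_prod_type]
    calc n * (n + 1) = ∑ _i : Fin n, (n + 1) := by simp [mul_comm]
      _ ≤ _ := Finset.sum_le_sum (fun i _ => hper i)
  have heq : ∑ p : Fin n × Fin ((n + 2) / 3 + 1), (P p).length = ∑ p : Fin n × Fin ((n + 2) / 3 + 1), (t p).card := by
    exact Finset.sum_congr rfl (fun p _ => (hcard p).symm)
  rw [heq] at htot
  nlinarith [htot, hsum_le, hn]
end

section
/- Let H be a loopless multigraph and k a positive integer. If the edge multiset of H can be partitioned into k matchings (i.e., the chromatic index χ'(H) ≤ k), then the edge multiset of H can be partitioned into k matchings whose sizes pairwise differ by at most one (an equitable proper edge k-coloring). -/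
def IsProperEdgeColoring {V : Type*} {ι : Type*} {C : Type*}
    (f : ι → V × V) (c : ι → C) : Prop :=
  ∀ i j, i ≠ j → c i = c j →
    (f i).1 ≠ (f j).1 ∧ (f i).1 ≠ (f j).2 ∧ (f i).2 ≠ (f j).1 ∧ (f i).2 ≠ (f j).2

open Finset

/-- number of edges of color `z`. -/
def eqCnt {ι : Type} [Fintype ι] {k : ℕ} (c : ι → Fin k) (z : Fin k) : ℕ :=
  #(Finset.univ.filter fun i => c i = z)

set_option maxHeartbeats 1000000 in
lemma improve {V : Type*} {ι : Type} [Fintype ι] (f : ι → V × V)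
    {k : ℕ} {c : ι → Fin k} (hc : IsProperEdgeColoring f c)
    {x y : Fin k} (hxy : eqCnt c y + 2 ≤ eqCnt c x) :
    ∃ c' : ι → Fin k, IsProperEdgeColoring f c' ∧
      eqCnt c' x + 1 = eqCnt c x ∧ eqCnt c' y = eqCnt c y + 1 ∧
      ∀ z, z ≠ x → z ≠ y → eqCnt c' z = eqCnt c z := by
  classical
  have hne : x ≠ y := by
    rintro rfl; omega
  -- the auxiliary graph on edge indices
  set G : SimpleGraph ι :=
    { Adj := fun i j => ((c i = x ∧ c j = y) ∨ (c i = y ∧ c j = x)) ∧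
        ((f i).1 = (f j).1 ∨ (f i).1 = (f j).2 ∨ (f i).2 = (f j).1 ∨ (f i).2 = (f j).2)
      symm := by
        constructor
        rintro i j ⟨hcol, hsh⟩
        refine ⟨by tauto, by tauto⟩
      loopless := by
        constructor
        rintro i ⟨hcol, -⟩
        rcases hcol with ⟨h1, h2⟩ | ⟨h1, h2⟩ <;> exact hne (h1 ▸ h2 ▸ rfl) } with hGdef
  haveI : Finite G.ConnectedComponent := Quot.finite _
  haveI : Fintype G.ConnectedComponent := Fintype.ofFinite _
  set mk : ι → G.ConnectedComponent := G.connectedComponentMk with hmk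
  -- adjacency implies same component
  have adj_mk : ∀ {i j}, G.Adj i j → mk i = mk j := by
    intro i j hij
    exact SimpleGraph.ConnectedComponent.sound hij.reachable
  have adj_col : ∀ {i j}, G.Adj i j → (c i = x ∨ c i = y) := by
    rintro i j ⟨hcol, -⟩; tauto
  -- fiberwise counts
  set aa : G.ConnectedComponent → ℕ :=
    fun K => #(Finset.univ.filter fun i => c i = x ∧ mk i = K) with haa
  set bb : G.ConnectedComponent → ℕ :=
    fun K => #(Finset.univ.filter fun i => c i = y ∧ mk i = K) with hbb
  have hax : eqCnt c x = ∑ K, aa K := by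
    rw [eqCnt, Finset.card_eq_sum_card_fiberwise (f := mk) (t := Finset.univ)
      (fun i _ => Finset.mem_univ (mk i))]
    simp [haa, Finset.filter_filter]
  have hby : eqCnt c y = ∑ K, bb K := by
    rw [eqCnt, Finset.card_eq_sum_card_fiberwise (f := mk) (t := Finset.univ)
      (fun i _ => Finset.mem_univ (mk i))]
    simp [hbb, Finset.filter_filter]
  -- pigeonhole: some component with more x than y
  obtain ⟨K, -, hK⟩ : ∃ K ∈ (Finset.univ : Finset G.ConnectedComponent), bb K < aa K := by
    apply Finset.exists_lt_of_sum_lt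
    rw [← hax, ← hby]; omega
  -- the component has excess exactly one
  have hKle : aa K ≤ bb K + 1 := by
    have haaK : 0 < aa K := by omega
    rw [haa] at haaK
    obtain ⟨r, hr⟩ := Finset.card_pos.mp haaK
    rw [Finset.mem_filter] at hr
    obtain ⟨-, hrx, hrK⟩ := hr
    set S : Finset ι := Finset.univ.filter (fun i => mk i = K) with hS
    have hrS : r ∈ S := by simp [hS, hrK]
    have reach_r : ∀ v ∈ S, G.Reachable v r := by
      intro v hv
      rw [hS, Finset.mem_filter] at hv
      exact SimpleGraph.ConnectedComponent.exact (hv.2.trans hrK.symm)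
    have colS : ∀ v ∈ S, c v = x ∨ c v = y := by
      intro v hv
      obtain ⟨p⟩ := reach_r v hv
      cases p with
      | nil => exact Or.inl hrx
      | cons h q => exact adj_col h
    have hstep : ∀ v, ∃ u, v ∈ S.erase r → G.Adj v u ∧ G.dist u r < G.dist v r := by
      intro v
      by_cases hv : v ∈ S.erase r
      · have hvr : v ≠ r := (Finset.mem_erase.mp hv).1
        have hrch : G.Reachable v r := reach_r v (Finset.mem_erase.mp hv).2
        have hd : G.dist v r ≠ 0 :=
          SimpleGraph.dist_ne_zero_iff_ne_and_reachable.mpr ⟨hvr, hrch⟩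
        obtain ⟨p, hp⟩ := SimpleGraph.exists_walk_of_dist_ne_zero hd
        cases p with
        | nil => simp [SimpleGraph.dist_self] at hd
        | cons h q =>
          refine ⟨_, fun _ => ⟨h, ?_⟩⟩
          have := SimpleGraph.dist_le q
          rw [SimpleGraph.Walk.length_cons] at hp
          omega
      · exact ⟨v, fun h => absurd h hv⟩
    choose g hg using hstep
    set ψ : ι → ι := fun v => if c v = y then v else g v with hψ
    have hψ_mem : ∀ v ∈ S.erase r, c (ψ v) = y ∧ mk (ψ v) = K := by
      intro v hv
      obtain ⟨hadj, -⟩ := hg v hv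
      have hvS := (Finset.mem_erase.mp hv).2
      have hvK : mk v = K := by
        rw [hS, Finset.mem_filter] at hvS; exact hvS.2
      by_cases hvy : c v = y
      · simp only [hψ, if_pos hvy]
        exact ⟨hvy, hvK⟩
      · have hgy : c (g v) = y := by
          rcases hadj.1 with ⟨-, h2⟩ | ⟨h1, -⟩
          · exact h2
          · exact absurd h1 hvy
        simp only [hψ, if_neg hvy]
        exact ⟨hgy, (adj_mk hadj).symm.trans hvK⟩
    have pair_inj : ∀ v1 ∈ S.erase r, ∀ v2 ∈ S.erase r,
        v1 = g v2 → g v1 = v2 → False := by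
      intro v1 h1 v2 h2 e1 e2
      have d1 := (hg v1 h1).2
      have d2 := (hg v2 h2).2
      rw [e2] at d1
      rw [e1] at d1
      omega
    have fiber2 : ∀ b ∈ (S.erase r).image ψ,
        #((S.erase r).filter fun v => ψ v = b) ≤ 2 := by
      intro b hb
      obtain ⟨v0, hv0, hv0b⟩ := Finset.mem_image.mp hb
      have hbY : c b = y := hv0b ▸ (hψ_mem v0 hv0).1
      -- every fiber element gives an edge of G at b
      have other : ∀ v ∈ (S.erase r).filter (fun v => ψ v = b),
          ∃ o, G.Adj b o ∧ ((v = b ∧ g v = o) ∨ (v = o ∧ g v = b)) := by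
        intro v hv
        rw [Finset.mem_filter] at hv
        obtain ⟨hvT, hvb⟩ := hv
        have hadj := (hg v hvT).1
        by_cases hvy : c v = y
        · have hvb' : v = b := by simpa [hψ, hvy] using hvb
          exact ⟨g v, hvb' ▸ hadj, Or.inl ⟨hvb', rfl⟩⟩
        · have hgb : g v = b := by simpa [hψ, hvy] using hvb
          exact ⟨v, (hgb ▸ hadj).symm, Or.inr ⟨rfl, hgb⟩⟩
      -- neighbors of b are x-colored and touch b
      have nbr_x : ∀ o, G.Adj b o → c o = x := by
        intro o ho
        rcases ho.1 with ⟨h1, -⟩ | ⟨-, h2⟩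
        · exact absurd (h1.symm.trans hbY) hne
        · exact h2
      have not_both1 : ∀ o1 o2, G.Adj b o1 → G.Adj b o2 → o1 ≠ o2 →
          ((f o1).1 = (f b).1 ∨ (f o1).2 = (f b).1) →
          ((f o2).1 = (f b).1 ∨ (f o2).2 = (f b).1) → False := by
        intro o1 o2 h1 h2 hne12 t1 t2
        obtain ⟨a1, a2, a3, a4⟩ := hc o1 o2 hne12 ((nbr_x o1 h1).trans (nbr_x o2 h2).symm)
        rcases t1 with t1 | t1 <;> rcases t2 with t2 | t2
        · exact a1 (t1.trans t2.symm)
        · exact a2 (t1.trans t2.symm)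
        · exact a3 (t1.trans t2.symm)
        · exact a4 (t1.trans t2.symm)
      have not_both2 : ∀ o1 o2, G.Adj b o1 → G.Adj b o2 → o1 ≠ o2 →
          ((f o1).1 = (f b).2 ∨ (f o1).2 = (f b).2) →
          ((f o2).1 = (f b).2 ∨ (f o2).2 = (f b).2) → False := by
        intro o1 o2 h1 h2 hne12 t1 t2
        obtain ⟨a1, a2, a3, a4⟩ := hc o1 o2 hne12 ((nbr_x o1 h1).trans (nbr_x o2 h2).symm)
        rcases t1 with t1 | t1 <;> rcases t2 with t2 | t2
        · exact a1 (t1.trans t2.symm)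
        · exact a2 (t1.trans t2.symm)
        · exact a3 (t1.trans t2.symm)
        · exact a4 (t1.trans t2.symm)
      have touches : ∀ o, G.Adj b o →
          ((f o).1 = (f b).1 ∨ (f o).2 = (f b).1) ∨
          ((f o).1 = (f b).2 ∨ (f o).2 = (f b).2) := by
        intro o ho
        rcases ho.2 with h | h | h | h
        · exact Or.inl (Or.inl h.symm)
        · exact Or.inl (Or.inr h.symm)
        · exact Or.inr (Or.inl h.symm)
        · exact Or.inr (Or.inr h.symm)
      by_contra hcard
      push_neg at hcard
      obtain ⟨v1, hv1, v2, hv2, v3, hv3, h12, h13, h23⟩ :=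
        Finset.two_lt_card.mp hcard
      obtain ⟨o1, ho1, hp1⟩ := other v1 hv1
      obtain ⟨o2, ho2, hp2⟩ := other v2 hv2
      obtain ⟨o3, ho3, hp3⟩ := other v3 hv3
      have hv1T := (Finset.mem_filter.mp hv1).1
      have hv2T := (Finset.mem_filter.mp hv2).1
      have hv3T := (Finset.mem_filter.mp hv3).1
      have odist : ∀ va vb oa ob, va ∈ S.erase r → vb ∈ S.erase r → va ≠ vb →
          ((va = b ∧ g va = oa) ∨ (va = oa ∧ g va = b)) →
          ((vb = b ∧ g vb = ob) ∨ (vb = ob ∧ g vb = b)) → oa ≠ ob := by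
        rintro va vb oa ob hva hvb hvab (⟨e1, e2⟩ | ⟨e1, e2⟩) (⟨e3, e4⟩ | ⟨e3, e4⟩) rfl
        · exact hvab (e1.trans e3.symm)
        · exact pair_inj va hva vb hvb (e1.trans e4.symm) (e2.trans e3.symm)
        · exact pair_inj vb hvb va hva (e3.trans e2.symm) (e4.trans e1.symm)
        · exact hvab (e1.trans e3.symm)
      have o12 : o1 ≠ o2 := odist v1 v2 o1 o2 hv1T hv2T h12 hp1 hp2
      have o13 : o1 ≠ o3 := odist v1 v3 o1 o3 hv1T hv3T h13 hp1 hp3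
      have o23 : o2 ≠ o3 := odist v2 v3 o2 o3 hv2T hv3T h23 hp2 hp3
      rcases touches o1 ho1 with t1 | t1 <;> rcases touches o2 ho2 with t2 | t2 <;>
        rcases touches o3 ho3 with t3 | t3
      · exact not_both1 o1 o2 ho1 ho2 o12 t1 t2
      · exact not_both1 o1 o2 ho1 ho2 o12 t1 t2
      · exact not_both1 o1 o3 ho1 ho3 o13 t1 t3
      · exact not_both2 o2 o3 ho2 ho3 o23 t2 t3
      · exact not_both1 o2 o3 ho2 ho3 o23 t2 t3
      · exact not_both2 o1 o3 ho1 ho3 o13 t1 t3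
      · exact not_both2 o1 o2 ho1 ho2 o12 t1 t2
      · exact not_both2 o1 o2 ho1 ho2 o12 t1 t2
    have himg : (S.erase r).image ψ ⊆ Finset.univ.filter fun i => c i = y ∧ mk i = K := by
      intro b hb
      obtain ⟨v, hv, rfl⟩ := Finset.mem_image.mp hb
      rw [Finset.mem_filter]
      exact ⟨Finset.mem_univ _, hψ_mem v hv⟩
    have hcount : #(S.erase r) ≤ 2 * bb K := by
      calc #(S.erase r) ≤ 2 * #((S.erase r).image ψ) :=
            Finset.card_le_mul_card_image _ 2 fiber2
        _ ≤ 2 * bb K := by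
            rw [hbb]
            exact Nat.mul_le_mul_left 2 (Finset.card_le_card himg)
    have e1 : S.filter (fun i => c i = x) = Finset.univ.filter fun i => c i = x ∧ mk i = K := by
      ext i
      simp only [hS, Finset.mem_filter, Finset.mem_univ, true_and]
      tauto
    have e2 : S.filter (fun i => ¬ c i = x) = Finset.univ.filter fun i => c i = y ∧ mk i = K := by
      ext i
      simp only [hS, Finset.mem_filter, Finset.mem_univ, true_and]
      constructor
      · rintro ⟨hK', hnx⟩
        exact ⟨(colS i (by rw [hS, Finset.mem_filter]; exact ⟨Finset.mem_univ _, hK'⟩)).resolve_left hnx, hK'⟩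
      · rintro ⟨hy, hK'⟩
        exact ⟨hK', by rw [hy]; exact hne.symm⟩
    have hScard : aa K + bb K = #S := by
      simp only [haa, hbb]
      rw [← e1, ← e2]
      exact Finset.card_filter_add_card_filter_not _
    have hT : #(S.erase r) + 1 = #S := Finset.card_erase_add_one hrS
    omega
  -- swap colors x and y on component K
  set c' : ι → Fin k := fun i =>
    if mk i = K then (if c i = x then y else if c i = y then x else c i) else c i with hc'
  have hc'in : ∀ i, mk i = K → c' i = (if c i = x then y else if c i = y then x else c i) := by
    intro i h; rw [hc']; simp [h]
  have hc'out : ∀ i, mk i ≠ K → c' i = c i := by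
    intro i h; rw [hc']; simp [h]
  have swap_inj : ∀ a b : Fin k, (if a = x then y else if a = y then x else a) =
      (if b = x then y else if b = y then x else b) → a = b := by
    intro a b
    split_ifs <;> (try simp_all) <;> (intro h; exact absurd h.symm (by assumption))
  have mixed : ∀ i j, mk i = K → mk j ≠ K → c' i = c' j →
      (f i).1 ≠ (f j).1 ∧ (f i).1 ≠ (f j).2 ∧ (f i).2 ≠ (f j).1 ∧ (f i).2 ≠ (f j).2 := by
    intro i j hiK hjK hcc
    have hij : i ≠ j := fun e => hjK (e ▸ hiK)
    rw [hc'in i hiK, hc'out j hjK] at hcc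
    have noadj : ¬ G.Adj i j := fun h => hjK ((adj_mk h).symm.trans hiK)
    by_cases hix : c i = x
    · rw [if_pos hix] at hcc
      exact ⟨fun h => noadj ⟨Or.inl ⟨hix, hcc.symm⟩, Or.inl h⟩,
        fun h => noadj ⟨Or.inl ⟨hix, hcc.symm⟩, Or.inr (Or.inl h)⟩,
        fun h => noadj ⟨Or.inl ⟨hix, hcc.symm⟩, Or.inr (Or.inr (Or.inl h))⟩,
        fun h => noadj ⟨Or.inl ⟨hix, hcc.symm⟩, Or.inr (Or.inr (Or.inr h))⟩⟩
    · rw [if_neg hix] at hcc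
      by_cases hiy : c i = y
      · rw [if_pos hiy] at hcc
        exact ⟨fun h => noadj ⟨Or.inr ⟨hiy, hcc.symm⟩, Or.inl h⟩,
          fun h => noadj ⟨Or.inr ⟨hiy, hcc.symm⟩, Or.inr (Or.inl h)⟩,
          fun h => noadj ⟨Or.inr ⟨hiy, hcc.symm⟩, Or.inr (Or.inr (Or.inl h))⟩,
          fun h => noadj ⟨Or.inr ⟨hiy, hcc.symm⟩, Or.inr (Or.inr (Or.inr h))⟩⟩
      · rw [if_neg hiy] at hcc
        exact hc i j hij hcc
  have hproper : IsProperEdgeColoring f c' := by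
    intro i j hij hcc
    by_cases hiK : mk i = K <;> by_cases hjK : mk j = K
    · rw [hc'in i hiK, hc'in j hjK] at hcc
      exact hc i j hij (swap_inj _ _ hcc)
    · exact mixed i j hiK hjK hcc
    · obtain ⟨a1, a2, a3, a4⟩ := mixed j i hjK hiK hcc.symm
      exact ⟨fun h => a1 h.symm, fun h => a3 h.symm, fun h => a2 h.symm, fun h => a4 h.symm⟩
    · rw [hc'out i hiK, hc'out j hjK] at hcc
      exact hc i j hij hcc
  have aaKeq : #(Finset.univ.filter fun i => c i = x ∧ mk i = K) =
      #(Finset.univ.filter fun i => c i = y ∧ mk i = K) + 1 := by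
    have h := le_antisymm hKle hK
    simp only [haa, hbb] at h
    exact h
  have hsplit : ∀ z : Fin k, eqCnt c z =
      #(Finset.univ.filter fun i => c i = z ∧ mk i = K) +
      #(Finset.univ.filter fun i => c i = z ∧ ¬ mk i = K) := by
    intro z
    rw [eqCnt, ← Finset.card_filter_add_card_filter_not
      (s := Finset.univ.filter fun i => c i = z) (p := fun i => mk i = K),
      Finset.filter_filter, Finset.filter_filter]
  have hcharx : ∀ i, (c' i = x) ↔ ((c i = y ∧ mk i = K) ∨ (c i = x ∧ ¬ mk i = K)) := by
    intro i
    by_cases hiK : mk i = K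
    · rw [hc'in i hiK]
      by_cases h1 : c i = x
      · rw [if_pos h1]
        constructor
        · intro h; exact absurd h hne.symm
        · rintro (⟨h2, -⟩ | ⟨-, h2⟩)
          · exact absurd (h1.symm.trans h2) hne
          · exact absurd hiK h2
      · by_cases h2 : c i = y
        · rw [if_neg h1, if_pos h2]
          simp [h2, hiK]
        · rw [if_neg h1, if_neg h2]
          constructor
          · intro h; exact absurd h h1
          · rintro (⟨h3, -⟩ | ⟨h3, -⟩)
            · exact absurd h3 h2
            · exact absurd h3 h1
    · rw [hc'out i hiK]
      constructor
      · intro h; exact Or.inr ⟨h, hiK⟩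
      · rintro (⟨-, h3⟩ | ⟨h3, -⟩)
        · exact absurd h3 hiK
        · exact h3
  have hchary : ∀ i, (c' i = y) ↔ ((c i = x ∧ mk i = K) ∨ (c i = y ∧ ¬ mk i = K)) := by
    intro i
    by_cases hiK : mk i = K
    · rw [hc'in i hiK]
      by_cases h1 : c i = x
      · rw [if_pos h1]
        simp [h1, hiK]
      · by_cases h2 : c i = y
        · rw [if_neg h1, if_pos h2]
          constructor
          · intro h; exact absurd h hne
          · rintro (⟨h3, -⟩ | ⟨-, h3⟩)
            · exact absurd h3 h1
            · exact absurd hiK h3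
        · rw [if_neg h1, if_neg h2]
          constructor
          · intro h; exact absurd h h2
          · rintro (⟨h3, -⟩ | ⟨h3, -⟩)
            · exact absurd h3 h1
            · exact absurd h3 h2
    · rw [hc'out i hiK]
      constructor
      · intro h; exact Or.inr ⟨h, hiK⟩
      · rintro (⟨-, h3⟩ | ⟨h3, -⟩)
        · exact absurd h3 hiK
        · exact h3
  have hx' : Finset.univ.filter (fun i => c' i = x) =
      (Finset.univ.filter fun i => c i = y ∧ mk i = K) ∪
      (Finset.univ.filter fun i => c i = x ∧ ¬ mk i = K) := by
    ext i
    simp only [Finset.mem_filter, Finset.mem_union, Finset.mem_univ, true_and]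
    exact hcharx i
  have hy' : Finset.univ.filter (fun i => c' i = y) =
      (Finset.univ.filter fun i => c i = x ∧ mk i = K) ∪
      (Finset.univ.filter fun i => c i = y ∧ ¬ mk i = K) := by
    ext i
    simp only [Finset.mem_filter, Finset.mem_union, Finset.mem_univ, true_and]
    exact hchary i
  have hdisjx : Disjoint (Finset.univ.filter fun i => c i = y ∧ mk i = K)
      (Finset.univ.filter fun i => c i = x ∧ ¬ mk i = K) := by
    rw [Finset.disjoint_left]
    intro a ha hb
    rw [Finset.mem_filter] at ha hb
    exact hne (hb.2.1.symm.trans ha.2.1)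
  have hdisjy : Disjoint (Finset.univ.filter fun i => c i = x ∧ mk i = K)
      (Finset.univ.filter fun i => c i = y ∧ ¬ mk i = K) := by
    rw [Finset.disjoint_left]
    intro a ha hb
    rw [Finset.mem_filter] at ha hb
    exact hne (ha.2.1.symm.trans hb.2.1)
  have hcx : eqCnt c' x = #(Finset.univ.filter fun i => c i = y ∧ mk i = K) +
      #(Finset.univ.filter fun i => c i = x ∧ ¬ mk i = K) := by
    rw [eqCnt, hx', Finset.card_union_of_disjoint hdisjx]
  have hcy : eqCnt c' y = #(Finset.univ.filter fun i => c i = x ∧ mk i = K) +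
      #(Finset.univ.filter fun i => c i = y ∧ ¬ mk i = K) := by
    rw [eqCnt, hy', Finset.card_union_of_disjoint hdisjy]
  refine ⟨c', hproper, ?_, ?_, ?_⟩
  · have h1 := hsplit x
    omega
  · have h1 := hsplit y
    omega
  · intro z hzx hzy
    rw [eqCnt, eqCnt]
    congr 1
    ext i
    simp only [Finset.mem_filter, Finset.mem_univ, true_and]
    by_cases hiK : mk i = K
    · rw [hc'in i hiK]
      by_cases h1 : c i = x
      · rw [if_pos h1]
        constructor
        · intro h; exact absurd h.symm hzy
        · intro h; exact absurd (h1.symm.trans h).symm hzx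
      · by_cases h2 : c i = y
        · rw [if_neg h1, if_pos h2]
          constructor
          · intro h; exact absurd h.symm hzx
          · intro h; exact absurd (h2.symm.trans h).symm hzy
        · rw [if_neg h1, if_neg h2]
    · rw [hc'out i hiK]

/-- If the edge multiset of a loopless multigraph `H` can be partitioned into `k` matchings
(i.e. `χ'(H) ≤ k`), then it can be partitioned into `k` matchings whose sizes pairwise differ
by at most one (an equitable proper edge `k`-coloring). -/
theorem exists_equitable_edge_coloring (V : Type*) (ι : Type) [Fintype ι]
    (f : ι → V × V) (hloopless : ∀ i, (f i).1 ≠ (f i).2)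
    (k : ℕ) (hk : 0 < k)
    (h : ∃ c : ι → Fin k, IsProperEdgeColoring f c) :
    ∃ c : ι → Fin k, IsProperEdgeColoring f c ∧
      ∀ x y : Fin k,
        Nat.card {i : ι // c i = x} ≤ Nat.card {i : ι // c i = y} + 1 := by
  classical
  obtain ⟨c0, hc0⟩ := h
  obtain ⟨c, hcmem, hmin⟩ := Finset.exists_min_image
    (Finset.univ.filter fun c : ι → Fin k => IsProperEdgeColoring f c)
    (fun c => ∑ z, (eqCnt c z) ^ 2) ⟨c0, by simp [hc0]⟩
  rw [Finset.mem_filter] at hcmem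
  refine ⟨c, hcmem.2, ?_⟩
  intro x y
  have hcard : ∀ z, Nat.card {i : ι // c i = z} = eqCnt c z := by
    intro z
    rw [Nat.card_eq_fintype_card, eqCnt, Fintype.card_subtype]
  rw [hcard, hcard]
  by_contra hcon
  push_neg at hcon
  obtain ⟨c', hp', h1, h2, h3⟩ := improve f hcmem.2 (x := x) (y := y) (by omega)
  have hxy : x ≠ y := by rintro rfl; omega
  have hlt : ∑ z, (eqCnt c' z) ^ 2 < ∑ z, (eqCnt c z) ^ 2 := by
    have hyu : y ∈ Finset.univ.erase x := Finset.mem_erase.mpr ⟨hxy.symm, Finset.mem_univ _⟩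
    have decomp : ∀ d : ι → Fin k, ∑ z, (eqCnt d z) ^ 2 =
        (eqCnt d x) ^ 2 + ((eqCnt d y) ^ 2 +
          ∑ z ∈ (Finset.univ.erase x).erase y, (eqCnt d z) ^ 2) := by
      intro d
      rw [← Finset.add_sum_erase _ _ (Finset.mem_univ x), ← Finset.add_sum_erase _ _ hyu]
    rw [decomp c, decomp c']
    have hrest : ∑ z ∈ (Finset.univ.erase x).erase y, (eqCnt c' z) ^ 2 =
        ∑ z ∈ (Finset.univ.erase x).erase y, (eqCnt c z) ^ 2 := by
      apply Finset.sum_congr rfl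
      intro z hz
      rw [Finset.mem_erase, Finset.mem_erase] at hz
      rw [h3 z hz.2.1 hz.1]
    rw [hrest]
    have e1 : eqCnt c x = eqCnt c' x + 1 := h1.symm
    have e2 : eqCnt c' y = eqCnt c y + 1 := h2
    have e3 : eqCnt c y + 1 ≤ eqCnt c' x := by omega
    nlinarith [sq_nonneg (eqCnt c' x), sq_nonneg (eqCnt c y)]
  exact absurd hlt (not_lt.mpr (hmin c' (by simp [hp'])))
end

section
/- Let D be a demand graph (loopless multigraph) on the vertex set of K_{n,n}. If Δ(D) ≤ (n − 7)/6, then D is realizable in K_{n,n}. -/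
/-- The degree (with multiplicity) of a vertex `v` in the demand multigraph `f`. -/
noncomputable def mdeg {V : Type*} {ι : Type*} (f : ι → V × V) (v : V) : ℕ :=
  Nat.card {i : ι // (f i).1 = v ∨ (f i).2 = v}

namespace RealizableAux
open Finset Sum SimpleGraph
open Fin.NatCast

/-- Generic greedy coloring lemma. -/
lemma exists_greedy {β : Type*} [Fintype β] [DecidableEq β] :
    ∀ (M : ℕ) (B : Fin M → Finset β) (R : Fin M → Fin M → Prop) [DecidableRel R],
      (∀ i, (B i).card + (univ.filter (fun j => R i j)).card < Fintype.card β) →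
      ∃ c : Fin M → β, (∀ i, c i ∉ B i) ∧ ∀ i j, R i j → j < i → c i ≠ c j := by
  intro M
  induction M with
  | zero =>
      intro B R _ _
      exact ⟨fun i => i.elim0, fun i => i.elim0, fun i => i.elim0⟩
  | succ M ih =>
      intro B R _ hcard
      obtain ⟨c', hc'B, hc'R⟩ := ih (fun i => B i.castSucc)
        (fun i j => R i.castSucc j.castSucc) (by
          intro i
          refine lt_of_le_of_lt ?_ (hcard i.castSucc)
          gcongr
          refine Finset.card_le_card_of_injOn Fin.castSucc ?_ ?_
          · intro j hj
            simp only [Finset.mem_coe, mem_filter, mem_univ, true_and] at hj ⊢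
            exact hj
          · intro a _ b _ hab
            exact Fin.castSucc_injective _ hab)
      set S : Finset β := B (Fin.last M) ∪
        ((univ.filter (fun j : Fin M => R (Fin.last M) j.castSucc)).image c') with hS
      have hScard : S.card < Fintype.card β := by
        refine lt_of_le_of_lt (Finset.card_union_le _ _) ?_
        refine lt_of_le_of_lt ?_ (hcard (Fin.last M))
        gcongr
        refine le_trans Finset.card_image_le ?_
        refine Finset.card_le_card_of_injOn Fin.castSucc ?_ ?_
        · intro j hj
          simp only [Finset.mem_coe, mem_filter, mem_univ, true_and] at hj ⊢
          exact hj
        · intro a _ b _ hab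
          exact Fin.castSucc_injective _ hab
      have hv : ∃ v : β, v ∉ S := by
        by_contra h
        push_neg at h
        have : (univ : Finset β) ⊆ S := fun v _ => h v
        have := Finset.card_le_card this
        simp only [Finset.card_univ] at this
        omega
      obtain ⟨v, hv⟩ := hv
      refine ⟨Fin.lastCases v c', ?_, ?_⟩
      · intro i
        cases i using Fin.lastCases with
        | last =>
            simp only [Fin.lastCases_last]
            intro h
            exact hv (Finset.mem_union_left _ h)
        | cast i =>
            simp only [Fin.lastCases_castSucc]
            exact hc'B i
      · intro i j hR hlt
        cases i using Fin.lastCases with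
        | last =>
            have hj : j ≠ Fin.last M := Fin.ne_of_lt hlt
            obtain ⟨j', rfl⟩ := Fin.exists_castSucc_eq.2 hj
            simp only [Fin.lastCases_last, Fin.lastCases_castSucc]
            intro heq
            apply hv
            refine Finset.mem_union_right _ ?_
            rw [heq]
            exact Finset.mem_image_of_mem c' (by simpa using hR)
        | cast i =>
            have hj : j ≠ Fin.last M := by
              intro h
              subst h
              exact absurd hlt (by simp [Fin.lt_iff_val_lt_val])
            obtain ⟨j', rfl⟩ := Fin.exists_castSucc_eq.2 hj
            simp only [Fin.lastCases_castSucc]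
            exact hc'R i j' hR (by simpa using hlt)


section Main
variable {n : ℕ} {ι : Type} [Fintype ι]
/-- The endpoint of demand edge `i` on side `b`. -/
def endpt (f : ι → (Fin n ⊕ Fin n) × (Fin n ⊕ Fin n)) (i : ι) (b : Bool) : Fin n ⊕ Fin n :=
  if b then (f i).1 else (f i).2

/-- The edge-ends located at vertex `w`. -/
abbrev EndsAt (f : ι → (Fin n ⊕ Fin n) × (Fin n ⊕ Fin n)) (w : Fin n ⊕ Fin n) : Type :=
  {p : ι × Bool // endpt f p.1 p.2 = w}

/-- local index of the end `(i, b)` among the ends at its vertex. -/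
noncomputable def K (f : ι → (Fin n ⊕ Fin n) × (Fin n ⊕ Fin n)) (i : ι) (b : Bool) : ℕ :=
  ((Fintype.equivFin (EndsAt f (endpt f i b))) ⟨(i, b), rfl⟩).val

lemma K_spec (f : ι → (Fin n ⊕ Fin n) × (Fin n ⊕ Fin n)) (i : ι) (b : Bool)
    (w : Fin n ⊕ Fin n) (h : endpt f i b = w) :
    K f i b = ((Fintype.equivFin (EndsAt f w)) ⟨(i, b), h⟩).val := by
  subst h; rfl

lemma K_inj (f : ι → (Fin n ⊕ Fin n) × (Fin n ⊕ Fin n)) {i j : ι} {b b' : Bool}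
    (h : endpt f i b = endpt f j b') (hK : K f i b = K f j b') : (i, b) = (j, b') := by
  rw [K_spec f i b (endpt f j b') h, K_spec f j b' (endpt f j b') rfl] at hK
  have h2 := (Fintype.equivFin (EndsAt f (endpt f j b'))).injective (Fin.val_injective hK)
  exact congrArg Subtype.val h2

lemma card_EndsAt_le {d : ℕ} (f : ι → (Fin n ⊕ Fin n) × (Fin n ⊕ Fin n))
    (hloop : ∀ i, (f i).1 ≠ (f i).2)
    (hd : ∀ v, (univ.filter (fun i : ι => (f i).1 = v ∨ (f i).2 = v)).card ≤ d)
    (w : Fin n ⊕ Fin n) : Fintype.card (EndsAt f w) ≤ d := by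
  classical
  have hinj : Function.Injective
      (fun p : EndsAt f w => (⟨p.val.1, by
        rcases p with ⟨⟨i, b⟩, hp⟩
        cases b
        · exact Or.inr hp
        · exact Or.inl hp⟩ : {i : ι // (f i).1 = w ∨ (f i).2 = w})) := by
    rintro ⟨⟨i, b⟩, hp⟩ ⟨⟨j, b'⟩, hq⟩ hpq
    simp only [Subtype.mk.injEq] at hpq
    subst hpq
    have hbb : b = b' := by
      by_contra hne
      apply hloop i
      cases b <;> cases b' <;> simp_all [endpt]
    subst hbb
    rfl
  have := Fintype.card_le_of_injective _ hinj
  refine le_trans this ?_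
  rw [Fintype.card_subtype]
  exact hd w

lemma K_lt {d : ℕ} (f : ι → (Fin n ⊕ Fin n) × (Fin n ⊕ Fin n))
    (hloop : ∀ i, (f i).1 ≠ (f i).2)
    (hd : ∀ v, (univ.filter (fun i : ι => (f i).1 = v ∨ (f i).2 = v)).card ≤ d)
    (i : ι) (b : Bool) : K f i b < d :=
  lt_of_lt_of_le ((Fintype.equivFin (EndsAt f (endpt f i b))) ⟨(i, b), rfl⟩).isLt
    (card_EndsAt_le f hloop hd (endpt f i b))


variable [NeZero n]

/-- The "read row" of the end `(i,b)`: for an A-end its own index, for a B-end its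
canonical row. -/
noncomputable def rowOf (f : ι → (Fin n ⊕ Fin n) × (Fin n ⊕ Fin n)) (i : ι) (b : Bool) :
    Fin n :=
  (endpt f i b).elim id (fun w => w + 1 + (K f i b : Fin n))

noncomputable def RR (f : ι → (Fin n ⊕ Fin n) × (Fin n ⊕ Fin n)) (i : ι) : Finset (Fin n) :=
  {rowOf f i true, rowOf f i false}

def colsOf (f : ι → (Fin n ⊕ Fin n) × (Fin n ⊕ Fin n)) (i : ι) : Finset (Fin n) :=
  ((endpt f i true).elim (fun _ => (∅ : Finset (Fin n))) (fun w => {w})) ∪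
    ((endpt f i false).elim (fun _ => (∅ : Finset (Fin n))) (fun w => {w}))

def bands (d : ℕ) (x : Fin n) : Finset (Fin n) :=
  (Finset.range d).image (fun t : ℕ => x - 1 - (t : Fin n))

noncomputable def Bad (f : ι → (Fin n ⊕ Fin n) × (Fin n ⊕ Fin n)) (d : ℕ) (i : ι) :
    Finset (Fin n) :=
  ((RR f i).biUnion (bands d)) ∪ colsOf f i

lemma card_RR_le (f : ι → (Fin n ⊕ Fin n) × (Fin n ⊕ Fin n)) (i : ι) : (RR f i).card ≤ 2 := by
  unfold RR
  exact le_trans (Finset.card_insert_le _ _) (by simp)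

lemma card_Bad_le (f : ι → (Fin n ⊕ Fin n) × (Fin n ⊕ Fin n)) (d : ℕ) (i : ι) :
    (Bad f d i).card ≤ 2 * d + 2 := by
  refine le_trans (Finset.card_union_le _ _) ?_
  have h1 : ((RR f i).biUnion (bands d)).card ≤ 2 * d := by
    refine le_trans (Finset.card_biUnion_le) ?_
    refine le_trans (Finset.sum_le_card_nsmul _ _ d ?_) ?_
    · intro x _
      exact le_trans Finset.card_image_le (by simp)
    · have := card_RR_le f i
      simp only [smul_eq_mul]
      nlinarith
  have h2 : (colsOf f i).card ≤ 2 := by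
    refine le_trans (Finset.card_union_le _ _) ?_
    have : ∀ w : Fin n ⊕ Fin n,
        (w.elim (fun _ => (∅ : Finset (Fin n))) (fun w => {w})).card ≤ 1 := by
      intro w; cases w <;> simp
    calc _ ≤ 1 + 1 := add_le_add (this _) (this _)
    _ = 2 := rfl
  omega

lemma rowOf_inl (f : ι → (Fin n ⊕ Fin n) × (Fin n ⊕ Fin n)) {i : ι} {b : Bool} {u : Fin n}
    (h : endpt f i b = Sum.inl u) : rowOf f i b = u := by
  simp [rowOf, h]

lemma rowOf_inr (f : ι → (Fin n ⊕ Fin n) × (Fin n ⊕ Fin n)) {i : ι} {b : Bool} {w : Fin n}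
    (h : endpt f i b = Sum.inr w) : rowOf f i b = w + 1 + (K f i b : Fin n) := by
  simp [rowOf, h]

lemma row_readers {d : ℕ} (f : ι → (Fin n ⊕ Fin n) × (Fin n ⊕ Fin n))
    (hloop : ∀ i, (f i).1 ≠ (f i).2)
    (hd : ∀ v, (univ.filter (fun i : ι => (f i).1 = v ∨ (f i).2 = v)).card ≤ d)
    (x : Fin n) : (univ.filter fun j : ι => x ∈ RR f j).card ≤ d + d := by
  classical
  rw [← Fintype.card_subtype]
  -- first injection: choose a witnessing end
  have hinj1 : Function.Injective (fun jh : {j : ι // x ∈ RR f j} =>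
      (if h : rowOf f jh.val true = x then (⟨(jh.val, true), h⟩ : {p : ι × Bool // rowOf f p.1 p.2 = x})
       else ⟨(jh.val, false), by
          have := jh.property
          simp only [RR, Finset.mem_insert, Finset.mem_singleton] at this
          rcases this with h1 | h1
          · exact absurd h1.symm h
          · exact h1.symm⟩)) := by
    intro a b hab
    apply Subtype.ext
    dsimp only at hab
    split at hab <;> split at hab <;>
      simpa using congrArg (fun z : {p : ι × Bool // rowOf f p.1 p.2 = x} => z.val.1) hab
  refine le_trans (Fintype.card_le_of_injective _ hinj1) ?_
  -- second injection: split by side of the witnessing end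
  have hinj2 : Function.Injective (fun p : {p : ι × Bool // rowOf f p.1 p.2 = x} =>
      (if h : endpt f p.val.1 p.val.2 = Sum.inl x then
          (Sum.inl ⟨p.val, h⟩ : EndsAt f (Sum.inl x) ⊕ Fin d)
        else Sum.inr ⟨K f p.val.1 p.val.2, K_lt f hloop hd _ _⟩)) := by
    have key : ∀ p : {p : ι × Bool // rowOf f p.1 p.2 = x},
        endpt f p.val.1 p.val.2 ≠ Sum.inl x →
        ∃ w : Fin n, endpt f p.val.1 p.val.2 = Sum.inr w ∧
          w + 1 + (K f p.val.1 p.val.2 : Fin n) = x := by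
      rintro ⟨⟨i, b⟩, hp⟩ hne
      dsimp only at hp hne ⊢
      rcases h : endpt f i b with u | w
      · exfalso
        apply hne
        rw [h]
        have h2 := rowOf_inl f h
        have : u = x := by rw [← hp, h2]
        rw [this]
      · exact ⟨w, rfl, by rw [← rowOf_inr f h]; exact hp⟩
    rintro p q hpq
    dsimp only at hpq
    split at hpq <;> split at hpq
    · apply Subtype.ext
      rename_i h1 h2
      simpa [Subtype.mk.injEq] using hpq
    · exact absurd hpq (by simp)
    · exact absurd hpq (by simp)
    · rename_i h1 h2
      obtain ⟨w1, he1, hr1⟩ := key p h1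
      obtain ⟨w2, he2, hr2⟩ := key q h2
      simp only [Sum.inr.injEq, Fin.mk.injEq] at hpq
      have hw : w1 = w2 := by
        have : w1 + 1 + (K f p.val.1 p.val.2 : Fin n)
            = w2 + 1 + (K f p.val.1 p.val.2 : Fin n) := by
          rw [hr1, hpq, hr2]
        have := add_right_cancel this
        exact add_right_cancel this
      have hend : endpt f p.val.1 p.val.2 = endpt f q.val.1 q.val.2 := by
        rw [he1, he2, hw]
      exact Subtype.ext (K_inj f hend hpq)
  refine le_trans (Fintype.card_le_of_injective _ hinj2) ?_
  rw [Fintype.card_sum, Fintype.card_fin]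
  exact Nat.add_le_add_right (card_EndsAt_le f hloop hd _) d

lemma conflict_card {d : ℕ} (f : ι → (Fin n ⊕ Fin n) × (Fin n ⊕ Fin n))
    (hloop : ∀ i, (f i).1 ≠ (f i).2)
    (hd : ∀ v, (univ.filter (fun i : ι => (f i).1 = v ∨ (f i).2 = v)).card ≤ d)
    (i : ι) : (univ.filter fun j : ι => (RR f i ∩ RR f j).Nonempty).card ≤ 4 * d := by
  classical
  have hsub : (univ.filter fun j : ι => (RR f i ∩ RR f j).Nonempty) ⊆
      (RR f i).biUnion (fun x => univ.filter fun j => x ∈ RR f j) := by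
    intro j hj
    simp only [mem_filter, mem_univ, true_and] at hj
    obtain ⟨x, hx⟩ := hj
    simp only [Finset.mem_inter] at hx
    exact Finset.mem_biUnion.2 ⟨x, hx.1, by simp [hx.2]⟩
  refine le_trans (Finset.card_le_card hsub) ?_
  refine le_trans Finset.card_biUnion_le ?_
  refine le_trans (Finset.sum_le_card_nsmul _ _ (d + d)
    (fun x _ => row_readers f hloop hd x)) ?_
  have := card_RR_le f i
  simp only [smul_eq_mul]
  nlinarith


-- ### new material

lemma sym2_mixed_eq {α β : Type*} {a a' : α} {b b' : β} :
    s(Sum.inl a, (Sum.inr b : α ⊕ β)) = s(Sum.inl a', Sum.inr b') ↔ a = a' ∧ b = b' := by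
  constructor
  · intro h
    rw [Sym2.eq_iff] at h
    rcases h with ⟨h1, h2⟩ | ⟨h1, h2⟩
    · exact ⟨Sum.inl.inj h1, Sum.inr.inj h2⟩
    · exact absurd h1 (by simp)
  · rintro ⟨rfl, rfl⟩; rfl

lemma mem_RR (f : ι → (Fin n ⊕ Fin n) × (Fin n ⊕ Fin n)) (i : ι) (b : Bool) :
    rowOf f i b ∈ RR f i := by
  cases b <;> simp [RR]

/-- The cells a route of demand edge `i` may use: "wander" cells in a read row with
column `c i`, and "canonical" cells of its own B-ends. -/
def Q (f : ι → (Fin n ⊕ Fin n) × (Fin n ⊕ Fin n)) (c : ι → Fin n) (i : ι)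
    (e : Sym2 (Fin n ⊕ Fin n)) : Prop :=
  (∃ b : Bool, e = s(Sum.inl (rowOf f i b), Sum.inr (c i))) ∨
  (∃ (b : Bool) (w : Fin n), endpt f i b = Sum.inr w ∧
      e = s(Sum.inl (w + 1 + (K f i b : Fin n)), Sum.inr w))

lemma wander_canon {d : ℕ} (f : ι → (Fin n ⊕ Fin n) × (Fin n ⊕ Fin n))
    (hloop : ∀ i, (f i).1 ≠ (f i).2)
    (hd : ∀ v, (univ.filter (fun i : ι => (f i).1 = v ∨ (f i).2 = v)).card ≤ d)
    (c : ι → Fin n) (hcB : ∀ i, c i ∉ Bad f d i)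
    {i j : ι} {b b' : Bool} {w : Fin n}
    (hrow : rowOf f i b = w + 1 + (K f j b' : Fin n)) (hcol : c i = w) : False := by
  apply hcB i
  have hw : w = rowOf f i b - 1 - (K f j b' : Fin n) := by
    rw [hrow]; abel
  refine Finset.mem_union_left _ ?_
  refine Finset.mem_biUnion.2 ⟨rowOf f i b, mem_RR f i b, ?_⟩
  rw [hcol, hw]
  exact Finset.mem_image.2 ⟨K f j b', Finset.mem_range.2 (K_lt f hloop hd j b'), rfl⟩

lemma Q_disjoint {d : ℕ} (f : ι → (Fin n ⊕ Fin n) × (Fin n ⊕ Fin n))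
    (hloop : ∀ i, (f i).1 ≠ (f i).2)
    (hd : ∀ v, (univ.filter (fun i : ι => (f i).1 = v ∨ (f i).2 = v)).card ≤ d)
    (hdn : d < n)
    (c : ι → Fin n) (hcB : ∀ i, c i ∉ Bad f d i)
    (hcC : ∀ i j, i ≠ j → (RR f i ∩ RR f j).Nonempty → c i ≠ c j)
    {i j : ι} (hij : i ≠ j) {e : Sym2 (Fin n ⊕ Fin n)}
    (hi : Q f c i e) (hj : Q f c j e) : False := by
  rcases hi with ⟨b, rfl⟩ | ⟨b, w, hbw, rfl⟩
  · rcases hj with ⟨b', he⟩ | ⟨b', w', hbw', he⟩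
    · -- wander / wander
      rw [sym2_mixed_eq] at he
      obtain ⟨hr, hc⟩ := he
      refine hcC i j hij ⟨rowOf f i b, ?_⟩ hc
      refine Finset.mem_inter.2 ⟨mem_RR f i b, ?_⟩
      rw [hr]; exact mem_RR f j b'
    · -- wander i / canon j
      rw [sym2_mixed_eq] at he
      exact wander_canon f hloop hd c hcB he.1 he.2
  · rcases hj with ⟨b', he⟩ | ⟨b', w', hbw', he⟩
    · -- canon i / wander j
      rw [eq_comm, sym2_mixed_eq] at he
      exact wander_canon f hloop hd c hcB he.1 he.2
    · -- canon / canon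
      rw [sym2_mixed_eq] at he
      obtain ⟨hr, hww⟩ := he
      subst hww
      have hK : (K f i b : Fin n) = (K f j b' : Fin n) := add_left_cancel hr
      have hKn : K f i b = K f j b' := by
        have h1 := Fin.val_cast_of_lt (lt_trans (K_lt f hloop hd i b) hdn)
        have h2 := Fin.val_cast_of_lt (lt_trans (K_lt f hloop hd j b') hdn)
        rw [← h1, ← h2, hK]
      have := K_inj f (by rw [hbw, hbw']) hKn
      exact hij (congrArg Prod.fst this)

lemma exists_walk {d : ℕ} (f : ι → (Fin n ⊕ Fin n) × (Fin n ⊕ Fin n))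
    (hloop : ∀ i, (f i).1 ≠ (f i).2)
    (c : ι → Fin n) (hcB : ∀ i, c i ∉ Bad f d i) (i : ι) :
    ∃ W : (completeBipartiteGraph (Fin n) (Fin n)).Walk (f i).1 (f i).2,
      W.IsPath ∧ ∀ e ∈ W.edges, Q f c i e := by
  have hadj : ∀ a b : Fin n,
      (completeBipartiteGraph (Fin n) (Fin n)).Adj (Sum.inl a) (Sum.inr b) := by simp
  have hadj' : ∀ a b : Fin n,
      (completeBipartiteGraph (Fin n) (Fin n)).Adj (Sum.inr a) (Sum.inl b) := by simp
  have hept : endpt f i true = (f i).1 := rfl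
  have hepf : endpt f i false = (f i).2 := rfl
  have hcol : ∀ (b : Bool) (w : Fin n), endpt f i b = Sum.inr w → c i ≠ w := by
    intro b w hb hcw
    apply hcB i
    have hmem : w ∈ colsOf f i := by
      cases b <;> simp [colsOf, hb]
    rw [hcw]
    exact Finset.mem_union_right _ hmem
  rcases h1 : (f i).1 with u | u <;> rcases h2 : (f i).2 with v | v
  · -- AA case
    have h1' : endpt f i true = Sum.inl u := by rw [hept, h1]
    have h2' : endpt f i false = Sum.inl v := by rw [hepf, h2]
    have huv : u ≠ v := by
      intro h; apply hloop i; rw [h1, h2, h]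
    refine ⟨Walk.cons (hadj u (c i)) (Walk.cons (hadj' (c i) v) Walk.nil), ?_, ?_⟩
    · simp [Walk.cons_isPath_iff, huv]
    · intro e he
      simp only [Walk.edges_cons, Walk.edges_nil, List.mem_cons,
        List.not_mem_nil, or_false] at he
      rcases he with rfl | rfl
      · exact Or.inl ⟨true, by rw [rowOf_inl f h1']⟩
      · exact Or.inl ⟨false, by rw [rowOf_inl f h2']; exact Sym2.eq_swap⟩
  · -- AB case
    have h1' : endpt f i true = Sum.inl u := by rw [hept, h1]
    have h2' : endpt f i false = Sum.inr v := by rw [hepf, h2]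
    have hcv : c i ≠ v := hcol false v h2'
    by_cases hρ : v + 1 + (K f i false : Fin n) = u
    · refine ⟨Walk.cons (hadj u v) Walk.nil, ?_, ?_⟩
      · simp [Walk.cons_isPath_iff]
      · intro e he
        simp only [Walk.edges_cons, Walk.edges_nil, List.mem_cons,
          List.not_mem_nil, or_false] at he
        rcases he with rfl
        exact Or.inr ⟨false, v, h2', by rw [hρ]⟩
    · refine ⟨Walk.cons (hadj u (c i)) (Walk.cons (hadj' (c i) (v + 1 + (K f i false : Fin n)))
        (Walk.cons (hadj (v + 1 + (K f i false : Fin n)) v) Walk.nil)), ?_, ?_⟩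
      · have : u ≠ v + 1 + (K f i false : Fin n) := fun h => hρ h.symm
        simp [Walk.cons_isPath_iff, this, hcv]
      · intro e he
        simp only [Walk.edges_cons, Walk.edges_nil, List.mem_cons,
          List.not_mem_nil, or_false] at he
        rcases he with rfl | rfl | rfl
        · exact Or.inl ⟨true, by rw [rowOf_inl f h1']⟩
        · exact Or.inl ⟨false, by rw [rowOf_inr f h2']; exact Sym2.eq_swap⟩
        · exact Or.inr ⟨false, v, h2', rfl⟩
  · -- BA case
    have h1' : endpt f i true = Sum.inr u := by rw [hept, h1]
    have h2' : endpt f i false = Sum.inl v := by rw [hepf, h2]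
    have hcu : c i ≠ u := hcol true u h1'
    by_cases hρ : u + 1 + (K f i true : Fin n) = v
    · refine ⟨Walk.cons (hadj' u v) Walk.nil, ?_, ?_⟩
      · simp [Walk.cons_isPath_iff]
      · intro e he
        simp only [Walk.edges_cons, Walk.edges_nil, List.mem_cons,
          List.not_mem_nil, or_false] at he
        rcases he with rfl
        exact Or.inr ⟨true, u, h1', by rw [hρ]; exact Sym2.eq_swap⟩
    · refine ⟨Walk.cons (hadj' u (u + 1 + (K f i true : Fin n)))
        (Walk.cons (hadj (u + 1 + (K f i true : Fin n)) (c i))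
        (Walk.cons (hadj' (c i) v) Walk.nil)), ?_, ?_⟩
      · have hcu' : u ≠ c i := fun h => hcu h.symm
        simp [Walk.cons_isPath_iff, hρ, hcu']
      · intro e he
        simp only [Walk.edges_cons, Walk.edges_nil, List.mem_cons,
          List.not_mem_nil, or_false] at he
        rcases he with rfl | rfl | rfl
        · exact Or.inr ⟨true, u, h1', Sym2.eq_swap⟩
        · exact Or.inl ⟨true, by rw [rowOf_inr f h1']⟩
        · exact Or.inl ⟨false, by rw [rowOf_inl f h2']; exact Sym2.eq_swap⟩
  · -- BB case
    have h1' : endpt f i true = Sum.inr u := by rw [hept, h1]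
    have h2' : endpt f i false = Sum.inr v := by rw [hepf, h2]
    have hcu : c i ≠ u := hcol true u h1'
    have hcv : c i ≠ v := hcol false v h2'
    have huv : u ≠ v := by
      intro h; apply hloop i; rw [h1, h2, h]
    by_cases hρ : u + 1 + (K f i true : Fin n) = v + 1 + (K f i false : Fin n)
    · refine ⟨Walk.cons (hadj' u (u + 1 + (K f i true : Fin n)))
        (Walk.cons (hadj (u + 1 + (K f i true : Fin n)) v) Walk.nil), ?_, ?_⟩
      · simp [Walk.cons_isPath_iff, huv]
      · intro e he
        simp only [Walk.edges_cons, Walk.edges_nil, List.mem_cons,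
          List.not_mem_nil, or_false] at he
        rcases he with rfl | rfl
        · exact Or.inr ⟨true, u, h1', Sym2.eq_swap⟩
        · exact Or.inr ⟨false, v, h2', by rw [← hρ]⟩
    · refine ⟨Walk.cons (hadj' u (u + 1 + (K f i true : Fin n)))
        (Walk.cons (hadj (u + 1 + (K f i true : Fin n)) (c i))
        (Walk.cons (hadj' (c i) (v + 1 + (K f i false : Fin n)))
        (Walk.cons (hadj (v + 1 + (K f i false : Fin n)) v) Walk.nil))), ?_, ?_⟩
      · have hcu' : u ≠ c i := fun h => hcu h.symm
        simp [Walk.cons_isPath_iff, hρ, hcu', hcv, huv]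
      · intro e he
        simp only [Walk.edges_cons, Walk.edges_nil, List.mem_cons,
          List.not_mem_nil, or_false] at he
        rcases he with rfl | rfl | rfl | rfl
        · exact Or.inr ⟨true, u, h1', Sym2.eq_swap⟩
        · exact Or.inl ⟨true, by rw [rowOf_inr f h1']⟩
        · exact Or.inl ⟨false, by rw [rowOf_inr f h2']; exact Sym2.eq_swap⟩
        · exact Or.inr ⟨false, v, h2', rfl⟩


end Main

theorem aux (n d : ℕ) (hn : 6 * d + 7 ≤ n) {ι : Type} [Fintype ι]
    (f : ι → (Fin n ⊕ Fin n) × (Fin n ⊕ Fin n))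
    (hloop : ∀ i, (f i).1 ≠ (f i).2)
    (hd : ∀ v, (univ.filter (fun i : ι => (f i).1 = v ∨ (f i).2 = v)).card ≤ d) :
    IsRealizable (completeBipartiteGraph (Fin n) (Fin n)) f := by
  classical
  haveI : NeZero n := ⟨by omega⟩
  have key : ∃ c : ι → Fin n, (∀ i, c i ∉ Bad f d i) ∧
      ∀ i j, i ≠ j → (RR f i ∩ RR f j).Nonempty → c i ≠ c j := by
    obtain ⟨c', h1, h2⟩ := exists_greedy (Fintype.card ι)
      (fun a => Bad f d ((Fintype.equivFin ι).symm a))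
      (fun a b => a ≠ b ∧
        (RR f ((Fintype.equivFin ι).symm a) ∩ RR f ((Fintype.equivFin ι).symm b)).Nonempty)
      (by
        intro a
        have hB := card_Bad_le f d ((Fintype.equivFin ι).symm a)
        have hC : (univ.filter (fun b : Fin (Fintype.card ι) =>
            a ≠ b ∧ (RR f ((Fintype.equivFin ι).symm a) ∩
              RR f ((Fintype.equivFin ι).symm b)).Nonempty)).card ≤ 4 * d := by
          refine le_trans ?_ (conflict_card f hloop hd ((Fintype.equivFin ι).symm a))
          refine Finset.card_le_card_of_injOn (fun b => (Fintype.equivFin ι).symm b) ?_ ?_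
          · intro b hb
            simp only [Finset.mem_coe, mem_filter, mem_univ, true_and] at hb ⊢
            exact hb.2
          · intro x _ y _ hxy
            exact (Fintype.equivFin ι).symm.injective hxy
        rw [Fintype.card_fin]
        omega)
    refine ⟨fun i => c' ((Fintype.equivFin ι) i), ?_, ?_⟩
    · intro i
      have := h1 ((Fintype.equivFin ι) i)
      simpa using this
    · intro i j hij hnon
      have hab : (Fintype.equivFin ι) i ≠ (Fintype.equivFin ι) j :=
        fun h => hij ((Fintype.equivFin ι).injective h)
      rcases lt_or_gt_of_ne hab with h | h
      · refine Ne.symm (h2 ((Fintype.equivFin ι) j) ((Fintype.equivFin ι) i)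
          ⟨hab.symm, ?_⟩ h)
        rw [Equiv.symm_apply_apply, Equiv.symm_apply_apply, Finset.inter_comm]
        exact hnon
      · refine h2 ((Fintype.equivFin ι) i) ((Fintype.equivFin ι) j) ⟨hab, ?_⟩ h
        rw [Equiv.symm_apply_apply, Equiv.symm_apply_apply]
        exact hnon
  obtain ⟨c, hcB, hcC⟩ := key
  have hdn : d < n := by omega
  have hwalk := fun i => exists_walk f hloop c hcB i
  refine ⟨fun i => (hwalk i).choose, fun i => (hwalk i).choose_spec.1, ?_⟩
  intro i j hij e hei hej
  exact Q_disjoint f hloop hd hdn c hcB hcC hij ((hwalk i).choose_spec.2 e hei)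
    ((hwalk j).choose_spec.2 e hej)

end RealizableAux

/-- Every loopless demand multigraph on the vertex set of `K_{n,n}` with maximum degree at
most `(n - 7) / 6` is realizable in `K_{n,n}`. -/
theorem realizable_of_maxDegree_le_sixth (n : ℕ) (ι : Type) [Fintype ι]
    (f : ι → (Fin n ⊕ Fin n) × (Fin n ⊕ Fin n))
    (hloopless : ∀ i, (f i).1 ≠ (f i).2)
    (hdeg : ∀ v, (mdeg f v : ℝ) ≤ ((n : ℝ) - 7) / 6) :
    IsRealizable (completeBipartiteGraph (Fin n) (Fin n)) f := by
  classical
  cases isEmpty_or_nonempty ι with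
  | inl h =>
      exact ⟨fun i => isEmptyElim i, fun i => isEmptyElim i,
        fun i j hij e he => isEmptyElim i⟩
  | inr hne =>
      obtain ⟨i0⟩ := hne
      have hdeg1 : 1 ≤ mdeg f (f i0).1 := by
        rw [mdeg, Nat.card_eq_fintype_card]
        exact Fintype.card_pos_iff.2 ⟨⟨i0, Or.inl rfl⟩⟩
      have h13 : 13 ≤ n := by
        have h := hdeg (f i0).1
        have h1 : (1 : ℝ) ≤ (mdeg f (f i0).1 : ℝ) := by exact_mod_cast hdeg1
        have h2 : (13 : ℝ) ≤ (n : ℝ) := by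
          have := le_trans h1 h
          nlinarith
        exact_mod_cast h2
      have hmdeg_card : ∀ v, mdeg f v =
          (Finset.univ.filter (fun i : ι => (f i).1 = v ∨ (f i).2 = v)).card := by
        intro v
        rw [mdeg, Nat.card_eq_fintype_card, Fintype.card_subtype]
      have hcast : ((n - 7 : ℕ) : ℝ) = (n : ℝ) - 7 := by
        rw [Nat.cast_sub (by omega : 7 ≤ n)]
        norm_num
      have hn : 6 * ((n - 7) / 6) + 7 ≤ n := by
        have := Nat.div_mul_le_self (n - 7) 6
        omega
      refine RealizableAux.aux n ((n - 7) / 6) hn f hloopless ?_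
      intro v
      rw [← hmdeg_card v]
      have h6 : 6 * mdeg f v ≤ n - 7 := by
        have hr : ((6 * mdeg f v : ℕ) : ℝ) ≤ ((n - 7 : ℕ) : ℝ) := by
          rw [hcast]
          push_cast
          have := hdeg v
          linarith
        exact_mod_cast hr
      refine (Nat.le_div_iff_mul_le (by norm_num)).2 ?_
      omega
end

section
/- Let G be a simple graph and D a demand graph (loopless multigraph) on the vertex set of G. Then D is realizable in G if and only if there exists a finite sequence of liftings which, applied successively to D, results in a simple graph that is a subgraph of G. -/
/-- The edge multiset of the demand multigraph given by the indexed family `f`. -/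
def edgeMultiset {V : Type*} {ι : Type*} [Fintype ι] (f : ι → V × V) :
    Multiset (Sym2 V) :=
  Finset.univ.val.map fun i => s((f i).1, (f i).2)

/-- One lifting step on edge multisets: some edge `{x, y}` is replaced by the two edges
`{x, z}` and `{z, y}` for a vertex `z ∉ {x, y}` (a lifting to `z ∈ {x, y}` does nothing). -/
def LiftStep {V : Type*} [DecidableEq V] (D D' : Multiset (Sym2 V)) : Prop :=
  ∃ x y z : V, s(x, y) ∈ D ∧ z ≠ x ∧ z ≠ y ∧
    D' = s(x, z) ::ₘ s(z, y) ::ₘ D.erase s(x, y)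

section Aux

variable {V : Type*} [DecidableEq V] {G : SimpleGraph V}

lemma liftStep_of (x y z : V) (R : Multiset (Sym2 V)) (hzx : z ≠ x) (hzy : z ≠ y) :
    LiftStep (s(x,y) ::ₘ R) (s(x,z) ::ₘ s(z,y) ::ₘ R) :=
  ⟨x, y, z, Multiset.mem_cons_self _ _, hzx, hzy, by rw [Multiset.erase_cons_head]⟩

lemma liftStep_decomp {D D' : Multiset (Sym2 V)} (h : LiftStep D D') :
    ∃ (x y z : V) (R : Multiset (Sym2 V)), z ≠ x ∧ z ≠ y ∧
      D = s(x,y) ::ₘ R ∧ D' = s(x,z) ::ₘ s(z,y) ::ₘ R := by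
  obtain ⟨x, y, z, hm, hzx, hzy, rfl⟩ := h
  exact ⟨x, y, z, D.erase s(x,y), hzx, hzy, (Multiset.cons_erase hm).symm, rfl⟩

lemma liftStep_cons {D D' : Multiset (Sym2 V)} (a : Sym2 V) (h : LiftStep D D') :
    LiftStep (a ::ₘ D) (a ::ₘ D') := by
  obtain ⟨x, y, z, R, hzx, hzy, rfl, rfl⟩ := liftStep_decomp h
  rw [Multiset.cons_swap a s(x,y), Multiset.cons_swap a s(x,z), Multiset.cons_swap a s(z,y)]
  exact liftStep_of x y z _ hzx hzy

lemma rtg_cons {D D' : Multiset (Sym2 V)} (a : Sym2 V)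
    (h : Relation.ReflTransGen LiftStep D D') :
    Relation.ReflTransGen LiftStep (a ::ₘ D) (a ::ₘ D') := by
  induction h with
  | refl => exact .refl
  | tail _ hstep ih => exact ih.tail (liftStep_cons a hstep)

lemma rtg_add {D D' : Multiset (Sym2 V)} (E : Multiset (Sym2 V))
    (h : Relation.ReflTransGen LiftStep D D') :
    Relation.ReflTransGen LiftStep (E + D) (E + D') := by
  induction E using Multiset.induction with
  | empty => simpa using h
  | cons a E ih => simpa [Multiset.cons_add] using rtg_cons a ih

lemma rtg_add' {D D' : Multiset (Sym2 V)} (E : Multiset (Sym2 V))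
    (h : Relation.ReflTransGen LiftStep D D') :
    Relation.ReflTransGen LiftStep (D + E) (D' + E) := by
  rw [add_comm D E, add_comm D' E]; exact rtg_add E h

/-- Lifting an edge along a path. -/
lemma rtg_walk {x y : V} (W : G.Walk x y) (hW : W.IsPath) (hxy : x ≠ y) :
    Relation.ReflTransGen LiftStep {s(x,y)} (↑W.edges : Multiset (Sym2 V)) := by
  induction W with
  | nil => exact absurd rfl hxy
  | @cons x v y h W ih =>
    by_cases hv : v = y
    · subst hv
      rw [SimpleGraph.Walk.isPath_iff_eq_nil.mp hW.of_cons]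
      simp [SimpleGraph.Walk.edges_cons]
      exact .refl
    · have h1 : LiftStep {s(x,y)} (s(x,v) ::ₘ s(v,y) ::ₘ (0 : Multiset (Sym2 V))) := by
        have := liftStep_of x y v 0 h.ne' hv
        simpa using this
      have h2 := rtg_cons s(x,v) (ih hW.of_cons hv)
      refine (Relation.ReflTransGen.single h1).trans ?_
      have he : ((SimpleGraph.Walk.cons h W).edges : Multiset (Sym2 V))
          = s(x,v) ::ₘ (↑W.edges : Multiset (Sym2 V)) := by
        simp [SimpleGraph.Walk.edges_cons]
      rw [he]
      simpa using h2

lemma rtg_map_bind {ι : Type*} (m : Multiset ι) (F : ι → Sym2 V) (g : ι → Multiset (Sym2 V))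
    (h : ∀ i ∈ m, Relation.ReflTransGen LiftStep {F i} (g i)) :
    Relation.ReflTransGen LiftStep (m.map F) (m.bind g) := by
  induction m using Multiset.induction with
  | empty => simp [Multiset.zero_bind]; exact .refl
  | cons a m ih =>
    rw [Multiset.map_cons, Multiset.cons_bind]
    have h1 := rtg_cons (F a) (ih (fun i hi => h i (Multiset.mem_cons_of_mem hi)))
    have h2 := rtg_add' (m.bind g) (h a (Multiset.mem_cons_self _ _))
    refine h1.trans ?_
    rw [← Multiset.singleton_add]
    exact h2

lemma pairwise_of_nodup {α : Type*} {R : α → α → Prop} {s : Multiset α} (hs : s.Nodup)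
    (h : ∀ a b, a ≠ b → R a b) : s.Pairwise R := by
  obtain ⟨l, rfl⟩ := Quotient.exists_rep s
  exact ⟨l, rfl, List.Pairwise.imp (fun hab => h _ _ hab) hs⟩

lemma count_eq_card_fiber {ι : Type*} [Fintype ι] (F : ι → Sym2 V) (e : Sym2 V) :
    Multiset.count e (Finset.univ.val.map F) = Fintype.card {i // F i = e} := by
  classical
  rw [Multiset.count_map, Fintype.card_subtype, Finset.card_def, Finset.filter_val]
  congr 1
  exact Multiset.filter_congr (fun a _ => by constructor <;> (intro h; exact h.symm))

/-- transfer realizability along an equality of edge multisets -/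
lemma transfer {ι κ : Type*} [Fintype ι] [Fintype κ] (f : ι → V × V) (g : κ → V × V)
    (h : edgeMultiset f = edgeMultiset g) (hg : IsRealizable G g) : IsRealizable G f := by
  classical
  obtain ⟨P, hP, hdisj⟩ := hg
  have hcard : ∀ e : Sym2 V,
      Fintype.card {i // s((f i).1, (f i).2) = e} = Fintype.card {j // s((g j).1, (g j).2) = e} := by
    intro e
    have := congrArg (Multiset.count e) h
    rwa [edgeMultiset, edgeMultiset, count_eq_card_fiber, count_eq_card_fiber] at this
  have fib : ∀ e : Sym2 V,
      {i // s((f i).1, (f i).2) = e} ≃ {j // s((g j).1, (g j).2) = e} :=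
    fun e => (Fintype.card_eq.mp (hcard e)).some
  set σ := Equiv.ofFiberEquiv fib with hσdef
  have hσ : ∀ i, s((g (σ i)).1, (g (σ i)).2) = s((f i).1, (f i).2) :=
    fun i => Equiv.ofFiberEquiv_map fib i
  have key : ∀ i : ι, ∃ W : G.Walk (f i).1 (f i).2, W.IsPath ∧
      ∀ e, e ∈ W.edges ↔ e ∈ (P (σ i)).edges := by
    intro i
    rcases Sym2.eq_iff.mp (hσ i) with ⟨h1, h2⟩ | ⟨h1, h2⟩
    · exact ⟨(P (σ i)).copy h1 h2, by simpa using hP (σ i), by simp⟩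
    · refine ⟨(P (σ i)).reverse.copy h2 h1, by simpa using (hP (σ i)).reverse, ?_⟩
      intro e
      simp [SimpleGraph.Walk.edges_copy, SimpleGraph.Walk.edges_reverse, List.mem_reverse]
  choose W hWp hWe using key
  refine ⟨W, hWp, ?_⟩
  intro i j hij e hei hej
  exact hdisj (σ i) (σ j) (fun hc => hij (σ.injective hc)) e
    ((hWe i e).mp hei) ((hWe j e).mp hej)

lemma realizable_of_nodup {ι : Type*} [Fintype ι] (f : ι → V × V)
    (hnd : (edgeMultiset f).Nodup) (hsub : ∀ e ∈ edgeMultiset f, e ∈ G.edgeSet) :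
    IsRealizable G f := by
  have hadj : ∀ i, G.Adj (f i).1 (f i).2 := by
    intro i
    have hm : s((f i).1, (f i).2) ∈ edgeMultiset f :=
      Multiset.mem_map_of_mem _ (Finset.mem_univ i)
    exact (SimpleGraph.mem_edgeSet G).mp (hsub _ hm)
  refine ⟨fun i => (SimpleGraph.Path.singleton (hadj i)).1, fun i => (SimpleGraph.Path.singleton (hadj i)).2, ?_⟩
  intro i j hij e hei hej
  simp [SimpleGraph.Path.singleton] at hei hej
  have : s((f i).1, (f i).2) = s((f j).1, (f j).2) := by rw [← hei, ← hej]
  exact hij (Multiset.inj_on_of_nodup_map hnd i (Finset.mem_univ i) j (Finset.mem_univ j) this)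

lemma edgeMultiset_sum {ι κ : Type*} [Fintype ι] [Fintype κ] (f : ι ⊕ κ → V × V) :
    edgeMultiset f = edgeMultiset (f ∘ Sum.inl) + edgeMultiset (f ∘ Sum.inr) := by
  unfold edgeMultiset
  rw [show (Finset.univ : Finset (ι ⊕ κ)).val
      = Finset.univ.val.map Sum.inl + Finset.univ.val.map Sum.inr from by
    rw [← Finset.univ_disjSum_univ]; rfl]
  simp [Multiset.map_map, Function.comp]

lemma edgeMultiset_update {ι : Type*} [Fintype ι] [DecidableEq ι] (f : ι → V × V) (i0 : ι)
    (p : V × V) :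
    edgeMultiset (Function.update f i0 p)
      = s(p.1, p.2) ::ₘ (edgeMultiset f).erase s((f i0).1, (f i0).2) := by
  classical
  have hmem : i0 ∈ (Finset.univ : Finset ι).val := Finset.mem_univ i0
  have hrep : (Finset.univ : Finset ι).val = i0 ::ₘ (Finset.univ : Finset ι).val.erase i0 :=
    (Multiset.cons_erase hmem).symm
  have hnd : (Finset.univ : Finset ι).val.Nodup := Finset.univ.nodup
  have hmapF : edgeMultiset f
      = s((f i0).1, (f i0).2) ::ₘ ((Finset.univ : Finset ι).val.erase i0).map
        (fun i => s((f i).1, (f i).2)) := by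
    unfold edgeMultiset
    conv_lhs => rw [hrep]
    rw [Multiset.map_cons]
  have herase : ((Finset.univ : Finset ι).val.erase i0).map (fun i => s((f i).1, (f i).2))
      = (edgeMultiset f).erase s((f i0).1, (f i0).2) := by
    rw [hmapF, Multiset.erase_cons_head]
  have hmapF' : edgeMultiset (Function.update f i0 p)
      = s(p.1, p.2) ::ₘ ((Finset.univ : Finset ι).val.erase i0).map
        (fun i => s((f i).1, (f i).2)) := by
    unfold edgeMultiset
    conv_lhs => rw [hrep]
    rw [Multiset.map_cons, Function.update_self]
    congr 1
    apply Multiset.map_congr rfl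
    intro a ha
    have hane : a ≠ i0 := by
      intro h; subst h
      exact (Multiset.Nodup.notMem_erase hnd) ha
    rw [Function.update_of_ne hane]
  rw [hmapF', herase]

lemma step_back {ι : Type*} [Fintype ι] (f : ι → V × V) {D' : Multiset (Sym2 V)}
    (h : LiftStep (edgeMultiset f) D') :
    ∃ f' : (ι ⊕ Unit) → V × V, edgeMultiset f' = D' ∧
      (IsRealizable G f' → IsRealizable G f) := by
  classical
  obtain ⟨x, y, z, hm, hzx, hzy, rfl⟩ := h
  obtain ⟨i0, hi0mem, hi0⟩ := Multiset.mem_map.mp hm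
  refine ⟨Sum.elim (Function.update f i0 (x, z)) (fun _ => (z, y)), ?_, ?_⟩
  · rw [edgeMultiset_sum]
    have h1 : edgeMultiset ((Sum.elim (Function.update f i0 (x, z))
        (fun _ => (z, y)) : ι ⊕ Unit → V × V) ∘ Sum.inl)
        = s(x, z) ::ₘ (edgeMultiset f).erase s(x, y) := by
      have : ((Sum.elim (Function.update f i0 (x, z)) (fun _ => (z, y)) : ι ⊕ Unit → V × V)
          ∘ Sum.inl) = Function.update f i0 (x, z) := rfl
      rw [this, edgeMultiset_update, hi0]
    have h2 : edgeMultiset ((Sum.elim (Function.update f i0 (x, z))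
        (fun _ => (z, y)) : ι ⊕ Unit → V × V) ∘ Sum.inr) = {s(z, y)} := by
      unfold edgeMultiset
      rfl
    rw [h1, h2]
    rw [← Multiset.singleton_add, add_comm, ← Multiset.singleton_add, ← add_assoc]
    simp [Multiset.singleton_add, Multiset.cons_swap]
  · intro hreal
    obtain ⟨P, hP, hdisj⟩ := hreal
    have e1 : (Sum.elim (Function.update f i0 (x, z)) (fun _ => (z, y)) : ι ⊕ Unit → V × V)
        (Sum.inl i0) = (x, z) := by simp
    have e2 : (Sum.elim (Function.update f i0 (x, z)) (fun _ => (z, y)) : ι ⊕ Unit → V × V)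
        (Sum.inr ()) = (z, y) := rfl
    let W1 : G.Walk x z := (P (Sum.inl i0)).copy (congrArg Prod.fst e1) (congrArg Prod.snd e1)
    let W2 : G.Walk z y := (P (Sum.inr ())).copy (congrArg Prod.fst e2) (congrArg Prod.snd e2)
    let Wxy : G.Walk x y := W1.append W2
    have hWxy : ∀ e ∈ Wxy.edges, e ∈ (P (Sum.inl i0)).edges ∨ e ∈ (P (Sum.inr ())).edges := by
      intro e he
      rw [SimpleGraph.Walk.edges_append] at he
      rcases List.mem_append.mp he with h | h
      · left; rwa [SimpleGraph.Walk.edges_copy] at h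
      · right; rwa [SimpleGraph.Walk.edges_copy] at h
    have key : ∀ i : ι, ∃ W : G.Walk (f i).1 (f i).2, W.IsPath ∧
        ∀ e ∈ W.edges,
          (i ≠ i0 ∧ e ∈ (P (Sum.inl i)).edges) ∨
          (i = i0 ∧ (e ∈ (P (Sum.inl i0)).edges ∨ e ∈ (P (Sum.inr ())).edges)) := by
      intro i
      by_cases hi : i = i0
      · subst hi
        rcases Sym2.eq_iff.mp hi0 with ⟨h1, h2⟩ | ⟨h1, h2⟩
        · refine ⟨Wxy.bypass.copy h1.symm h2.symm, by simpa using Wxy.bypass_isPath, ?_⟩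
          intro e he
          rw [SimpleGraph.Walk.edges_copy] at he
          exact Or.inr ⟨rfl, hWxy e (Wxy.edges_bypass_subset he)⟩
        · refine ⟨Wxy.reverse.bypass.copy h1.symm h2.symm,
            by simpa using Wxy.reverse.bypass_isPath, ?_⟩
          intro e he
          rw [SimpleGraph.Walk.edges_copy] at he
          have := Wxy.reverse.edges_bypass_subset he
          rw [SimpleGraph.Walk.edges_reverse, List.mem_reverse] at this
          exact Or.inr ⟨rfl, hWxy e this⟩
      · have e3 : (Sum.elim (Function.update f i0 (x, z)) (fun _ => (z, y)) : ι ⊕ Unit → V × V)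
            (Sum.inl i) = f i := by simp [Function.update_of_ne hi]
        refine ⟨(P (Sum.inl i)).copy (congrArg Prod.fst e3) (congrArg Prod.snd e3),
          (SimpleGraph.Walk.isPath_copy _ _ _).mpr (hP (Sum.inl i)), ?_⟩
        intro e he
        rw [SimpleGraph.Walk.edges_copy] at he
        exact Or.inl ⟨hi, he⟩
    choose W hWp hWe using key
    refine ⟨W, hWp, ?_⟩
    intro i j hij e hei hej
    rcases hWe i e hei with ⟨hii, hi⟩ | ⟨hii, hi⟩ <;>
      rcases hWe j e hej with ⟨hjj, hj⟩ | ⟨hjj, hj⟩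
    · exact hdisj (Sum.inl i) (Sum.inl j) (by simpa using hij) e hi hj
    · rcases hj with hj | hj
      · exact hdisj (Sum.inl i) (Sum.inl i0) (by simpa using hii) e hi hj
      · exact hdisj (Sum.inl i) (Sum.inr ()) (by simp) e hi hj
    · rcases hi with hi | hi
      · exact hdisj (Sum.inl i0) (Sum.inl j) (by simpa using (Ne.symm hjj)) e hi hj
      · exact hdisj (Sum.inr ()) (Sum.inl j) (by simp) e hi hj
    · exact absurd (hii.trans hjj.symm) hij

end Aux

/-- A loopless demand multigraph `D` is realizable in a simple graph `G` if and only if some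
finite sequence of liftings transforms `D` into a simple graph which is a subgraph of `G`
(a multiset of edges of `G` without repetition). -/
theorem realizable_iff_liftings (V : Type*) [DecidableEq V] (G : SimpleGraph V)
    (ι : Type) [Fintype ι]
    (f : ι → V × V) (hloopless : ∀ i, (f i).1 ≠ (f i).2) :
    IsRealizable G f ↔
      ∃ D' : Multiset (Sym2 V),
        Relation.ReflTransGen LiftStep (edgeMultiset f) D' ∧
        D'.Nodup ∧ ∀ e ∈ D', e ∈ G.edgeSet := by
  constructor
  · rintro ⟨P, hP, hdisj⟩
    refine ⟨Finset.univ.val.bind (fun i => ((P i).edges : Multiset (Sym2 V))), ?_, ?_, ?_⟩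
    · exact rtg_map_bind _ _ _ (fun i _ => rtg_walk (P i) (hP i) (hloopless i))
    · rw [Multiset.nodup_bind]
      constructor
      · intro i _
        exact (hP i).edges_nodup
      · apply pairwise_of_nodup Finset.univ.nodup
        intro i j hij
        rw [Function.onFun, Multiset.disjoint_left]
        intro e hei hej
        exact hdisj i j hij e (by simpa using hei) (by simpa using hej)
    · intro e he
      rw [Multiset.mem_bind] at he
      obtain ⟨i, _, hei⟩ := he
      exact (P i).edges_subset_edgeSet (by simpa using hei)
  · rintro ⟨D', hrt, hnd, hsub⟩
    have main : ∀ (a : Multiset (Sym2 V)), Relation.ReflTransGen LiftStep a D' →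
        ∀ (κ : Type) [Fintype κ] (h : κ → V × V), edgeMultiset h = a → IsRealizable G h := by
      intro a ha
      induction ha using Relation.ReflTransGen.head_induction_on with
      | refl =>
        intro κ _ h he
        exact realizable_of_nodup h (he ▸ hnd) (fun e hem => hsub e (he ▸ hem))
      | head hstep _ ih =>
        intro κ _ h he
        obtain ⟨f', hf', himp⟩ := step_back h (he ▸ hstep)
        exact himp (ih _ f' hf')
    exact main _ hrt ι f rfl
end

section
/- Let n ≥ 2, N = n(n−1)/2, and let K_{N,N} have color classes {a_1,…,a_N} and {b_1,…,b_N}. Fix the bijection assigning to each pair 1 ≤ i < k ≤ n the index j = i − 1 + Σ_{l=0}^{k−1} l, and let M be the set of edges { {a_i, b_j}, {b_j, a_k} : 1 ≤ i < k ≤ n, j = i − 1 + Σ_{l=0}^{k−1} l }. Given a demand graph D on the vertex set {a_1,…,a_n} of the complete graph K_n, define a demand graph D' on the vertex set of K_{N,N} by E(D') = E(D) ∪ (E(K_{N,N}) \ M). Then D is realizable in K_n if and only if D' is realizable in K_{N,N}. -/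
/-- The set `M` of bipartite edges of `K_{N,N}` (with `N = n(n-1)/2`), encoded as pairs
`(column-A index, column-B index)`: for each pair `i < k` of vertices of `K_n` (0-indexed),
the fixed pairing bijection assigns the index `j = i + k(k-1)/2`, and `M` consists of the
edges `{a_i, b_j}` and `{b_j, a_k}`. -/
def Mset (n : ℕ) : Set (Fin (n * (n - 1) / 2) × Fin (n * (n - 1) / 2)) :=
  {p | ∃ i k : ℕ, i < k ∧ k < n ∧ (p.2 : ℕ) = i + k * (k - 1) / 2 ∧
        ((p.1 : ℕ) = i ∨ (p.1 : ℕ) = k)}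

open SimpleGraph in

/-- triangular numbers -/
def Tri (k : ℕ) : ℕ := k * (k - 1) / 2

lemma Tri_succ (k : ℕ) : Tri (k + 1) = Tri k + k := by
  unfold Tri
  rcases k with _ | k
  · simp
  · show (k + 2) * (k + 1) / 2 = (k + 1) * k / 2 + (k + 1)
    have : (k + 2) * (k + 1) = (k + 1) * k + (k + 1) * 2 := by ring
    rw [this, Nat.add_mul_div_right _ _ (by norm_num : 0 < 2)]

lemma Tri_mono : Monotone Tri := by
  have h : ∀ k, Tri k ≤ Tri (k + 1) := fun k => by rw [Tri_succ]; omega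
  exact monotone_nat_of_le_succ h

lemma Tri_lt {i k n : ℕ} (hik : i < k) (hkn : k < n) : i + Tri k < Tri n := by
  have h1 : i + Tri k < Tri (k + 1) := by rw [Tri_succ]; omega
  exact lt_of_lt_of_le h1 (Tri_mono hkn)

lemma Tri_inj {i k i' k' : ℕ} (h : i < k) (h' : i' < k')
    (he : i + Tri k = i' + Tri k') : i = i' ∧ k = k' := by
  have key : ∀ a b a' b' : ℕ, a < b → a' < b' → b ≤ b' → a + Tri b = a' + Tri b' → b = b' := by
    intro a b a' b' hab hab' hbb' heq
    by_contra hne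
    have hb : b + 1 ≤ b' := by omega
    have : a + Tri b < Tri (b + 1) := by rw [Tri_succ]; omega
    have h2 : Tri (b + 1) ≤ Tri b' := Tri_mono hb
    omega
  have hkk : k = k' := by
    rcases le_total k k' with hle | hle
    · exact key i k i' k' h h' hle he
    · exact (key i' k' i k h' h hle he.symm).symm
  subst hkk
  exact ⟨by omega, rfl⟩

section Pairing

variable {n : ℕ}

lemma Tri_pos (hn : 2 ≤ n) : 0 < n * (n - 1) / 2 := by
  have : Tri 2 ≤ Tri n := Tri_mono hn
  have h2 : Tri 2 = 1 := by decide
  show 0 < Tri n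
  omega

/-- The index of the pair `{u, v}` in `Fin (n*(n-1)/2)`. -/
def pairIdx (hn : 2 ≤ n) (u v : Fin n) : Fin (n * (n - 1) / 2) :=
  if h : u = v then ⟨0, Tri_pos hn⟩
  else ⟨min (u : ℕ) v + Tri (max (u : ℕ) v), by
    have hmm : min (u : ℕ) v < max (u : ℕ) v := by
      rcases lt_or_gt_of_ne (fun hc : (u : ℕ) = v => h (Fin.ext hc)) with h1 | h1 <;> omega
    exact Tri_lt hmm (by have := u.2; have := v.2; omega)⟩

lemma pairIdx_symm (hn : 2 ≤ n) (u v : Fin n) : pairIdx hn u v = pairIdx hn v u := by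
  unfold pairIdx
  rcases eq_or_ne u v with h | h
  · simp [h]
  · rw [dif_neg h, dif_neg (Ne.symm h)]
    apply Fin.ext
    show (u : ℕ) ⊓ v + Tri ((u : ℕ) ⊔ v) = (v : ℕ) ⊓ u + Tri ((v : ℕ) ⊔ u)
    rw [Nat.min_comm, Nat.max_comm]

lemma pairIdx_val (hn : 2 ≤ n) {u v : Fin n} (h : u ≠ v) :
    (pairIdx hn u v : ℕ) = min (u : ℕ) v + Tri (max (u : ℕ) v) := by
  rw [pairIdx, dif_neg h]

lemma pairIdx_inj (hn : 2 ≤ n) {u v u' v' : Fin n} (h : u ≠ v) (h' : u' ≠ v')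
    (he : pairIdx hn u v = pairIdx hn u' v') : s(u, v) = s(u', v') := by
  have hv := congrArg (Fin.val) he
  rw [pairIdx_val hn h, pairIdx_val hn h'] at hv
  have hmm : min (u : ℕ) v < max (u : ℕ) v := by
    rcases lt_or_gt_of_ne (fun hc : (u : ℕ) = v => h (Fin.ext hc)) with h1 | h1 <;> omega
  have hmm' : min (u' : ℕ) v' < max (u' : ℕ) v' := by
    rcases lt_or_gt_of_ne (fun hc : (u' : ℕ) = v' => h' (Fin.ext hc)) with h1 | h1 <;> omega
  obtain ⟨h1, h2⟩ := Tri_inj hmm hmm' hv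
  rw [Sym2.eq_iff]
  rcases le_total (u : ℕ) v with hle | hle <;> rcases le_total (u' : ℕ) v' with hle' | hle'
  · left; constructor <;> apply Fin.ext <;> omega
  · right; constructor <;> apply Fin.ext <;> omega
  · right; constructor <;> apply Fin.ext <;> omega
  · left; constructor <;> apply Fin.ext <;> omega

lemma pairIdx_mem_Mset (hn : 2 ≤ n) (hnN : n ≤ n * (n - 1) / 2) {u v : Fin n} (h : u ≠ v) :
    ((Fin.castLE hnN u, pairIdx hn u v) : Fin (n * (n - 1) / 2) × Fin (n * (n - 1) / 2)) ∈
      Mset n := by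
  refine ⟨min (u : ℕ) v, max (u : ℕ) v, ?_, ?_, ?_, ?_⟩
  · rcases lt_or_gt_of_ne (fun hc : (u : ℕ) = v => h (Fin.ext hc)) with h1 | h1 <;> omega
  · have := u.2; have := v.2; omega
  · exact pairIdx_val hn h
  · simp only [Fin.coe_castLE]; omega

/-- If two distinct A-vertices are matched to the same B-vertex by `M`, they are (the casts of)
the two endpoints of the `K_n`-edge indexed by that B-vertex. -/
lemma Mset_unique (hn : 2 ≤ n) (hnN : n ≤ n * (n - 1) / 2)
    {u v j : Fin (n * (n - 1) / 2)} (hu : ((u, j) : _ × _) ∈ Mset n)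
    (hv : ((v, j) : _ × _) ∈ Mset n) (huv : u ≠ v) :
    ∃ u' v' : Fin n, u = Fin.castLE hnN u' ∧ v = Fin.castLE hnN v' ∧ u' ≠ v' ∧
      j = pairIdx hn u' v' := by
  obtain ⟨i, k, hik, hkn, hj, hu1⟩ := hu
  obtain ⟨i', k', hik', hkn', hj', hv1⟩ := hv
  dsimp only at hj hu1 hj' hv1
  obtain ⟨hii, hkk⟩ : i = i' ∧ k = k' := Tri_inj hik hik' (by unfold Tri; omega)
  subst hii; subst hkk
  have hune : (u : ℕ) ≠ (v : ℕ) := fun hc => huv (Fin.ext hc)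
  have hu' : (u : ℕ) < n := by omega
  have hv' : (v : ℕ) < n := by omega
  set u'' : Fin n := ⟨u, hu'⟩ with hu''
  set v'' : Fin n := ⟨v, hv'⟩ with hv''
  have hne'' : u'' ≠ v'' := by
    intro hc
    have h3 : u''.val = v''.val := congrArg Fin.val hc
    exact hune h3
  refine ⟨u'', v'', Fin.ext rfl, Fin.ext rfl, hne'', ?_⟩
  apply Fin.ext
  rw [pairIdx_val hn hne'']
  show (j : ℕ) = min (u : ℕ) v + Tri (max (u : ℕ) v)
  have hmax : max (u : ℕ) v = k := by omega
  have hmin : min (u : ℕ) v = i := by omega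
  rw [hmax, hmin]
  unfold Tri
  omega

end Pairing

section WalkLemmas

variable {V : Type*} {G : SimpleGraph V}

/-- A walk of length one has edges `[s(a,b)]`. -/
lemma edges_of_length_one_s16 {a b : V} {W : G.Walk a b} (h : W.length = 1) :
    W.edges = [s(a, b)] := by
  cases W with
  | nil => simp at h
  | cons hadj p =>
    rw [SimpleGraph.Walk.length_cons] at h
    have h0 : p.length = 0 := by omega
    have := SimpleGraph.Walk.eq_of_length_eq_zero h0
    subst this
    have hp : p = SimpleGraph.Walk.nil := SimpleGraph.Walk.nil_iff_eq_nil.mp (SimpleGraph.Walk.length_eq_zero_iff.mp h0)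
    subst hp
    simp

/-- If a path from `a` to `b` contains the edge `s(a,b)`, it has length one. -/
lemma path_length_one_of_mem_edges {a b : V} (W : G.Walk a b) (hW : W.IsPath)
    (h : s(a, b) ∈ W.edges) : W.length = 1 := by
  cases W with
  | nil => simp at h
  | cons hadj p =>
    rename_i c
    rw [SimpleGraph.Walk.edges_cons, List.mem_cons] at h
    rw [SimpleGraph.Walk.cons_isPath_iff] at hW
    rcases h with h | h
    · rw [Sym2.eq_iff] at h
      rcases h with ⟨-, hbc⟩ | ⟨hac, -⟩
      · subst hbc
        have : p = SimpleGraph.Walk.nil := SimpleGraph.Walk.isPath_iff_eq_nil.mp hW.1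
        subst this
        simp
      · exact absurd hac hadj.ne
    · exact absurd (SimpleGraph.Walk.fst_mem_support_of_mem_edges p h) hW.2

/-- Replace every occurrence of the edge `s(x,y)` in a walk by a detour walk `Q` from `x` to
`y`. -/
lemma walk_subst {x y : V} (Q : G.Walk x y) :
    ∀ {u v : V} (W : G.Walk u v), ∃ W' : G.Walk u v,
      ∀ e ∈ W'.edges, (e ∈ W.edges ∧ e ≠ s(x, y)) ∨ e ∈ Q.edges := by
  intro u v W
  induction W with
  | nil => exact ⟨SimpleGraph.Walk.nil, by simp⟩
  | @cons u w v hadj p ih =>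
    obtain ⟨p', hp'⟩ := ih
    by_cases hc : s(u, w) = s(x, y)
    · rw [Sym2.eq_iff] at hc
      rcases hc with ⟨hux, hwy⟩ | ⟨huy, hwx⟩
      · subst hux; subst hwy
        refine ⟨Q.append p', ?_⟩
        intro e he
        rw [SimpleGraph.Walk.edges_append, List.mem_append] at he
        rcases he with he | he
        · exact Or.inr he
        · rcases hp' e he with h | h
          · exact Or.inl ⟨List.mem_cons_of_mem _ h.1, h.2⟩
          · exact Or.inr h
      · subst huy; subst hwx
        refine ⟨Q.reverse.append p', ?_⟩
        intro e he
        rw [SimpleGraph.Walk.edges_append, List.mem_append] at he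
        rcases he with he | he
        · rw [SimpleGraph.Walk.edges_reverse, List.mem_reverse] at he
          exact Or.inr he
        · rcases hp' e he with h | h
          · exact Or.inl ⟨List.mem_cons_of_mem _ h.1, h.2⟩
          · exact Or.inr h
    · refine ⟨SimpleGraph.Walk.cons hadj p', ?_⟩
      intro e he
      rw [SimpleGraph.Walk.edges_cons, List.mem_cons] at he
      rcases he with he | he
      · subst he
        exact Or.inl ⟨List.mem_cons_self, hc⟩
      · rcases hp' e he with h | h
        · exact Or.inl ⟨List.mem_cons_of_mem _ h.1, h.2⟩
        · exact Or.inr h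

end WalkLemmas

section Lift

open SimpleGraph Walk Sum

variable {n : ℕ} (hn : 2 ≤ n) (hnN : n ≤ n * (n - 1) / 2)

local notation "N" => n * (n - 1) / 2
local notation "K" => completeBipartiteGraph (Fin (n * (n - 1) / 2)) (Fin (n * (n - 1) / 2))

lemma adjAB (a b : Fin N) : (K).Adj (inl a) (inr b) := by simp

/-- Lift a path of `K_n` to a path in `K_{N,N}` through the matching `M`. -/
lemma lift_walk : ∀ {x y : Fin n} (W : (⊤ : SimpleGraph (Fin n)).Walk x y), W.IsPath →
    ∃ W' : (K).Walk (inl (Fin.castLE hnN x)) (inl (Fin.castLE hnN y)),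
      W'.IsPath ∧
      (∀ v' ∈ W'.support, (∃ u ∈ W.support, v' = inl (Fin.castLE hnN u)) ∨
        (∃ a b : Fin n, a ≠ b ∧ s(a, b) ∈ W.edges ∧ v' = inr (pairIdx hn a b))) ∧
      (∀ e' ∈ W'.edges, ∃ a b : Fin n, a ≠ b ∧ s(a, b) ∈ W.edges ∧
        (e' = s(inl (Fin.castLE hnN a), inr (pairIdx hn a b)) ∨
         e' = s(inl (Fin.castLE hnN b), inr (pairIdx hn a b)))) := by
  intro x y W
  induction W with
  | nil =>
    intro _
    refine ⟨Walk.nil, by simp, ?_, by simp⟩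
    intro v' hv'
    simp only [Walk.support_nil, List.mem_singleton] at hv'
    exact Or.inl ⟨_, Walk.start_mem_support _, hv'⟩
  | @cons u w y hadj p ih =>
    intro hW
    rw [Walk.cons_isPath_iff] at hW
    obtain ⟨p', hp'path, hsup, hedge⟩ := ih hW.1
    have huw : u ≠ w := hadj.ne
    set j := pairIdx hn u w with hj
    have hadj2 : (K).Adj (inr j) (inl (Fin.castLE hnN w)) := (adjAB _ _).symm
    refine ⟨Walk.cons (adjAB (Fin.castLE hnN u) j) (Walk.cons hadj2 p'), ?_, ?_, ?_⟩
    · rw [Walk.cons_isPath_iff, Walk.cons_isPath_iff]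
      refine ⟨⟨hp'path, ?_⟩, ?_⟩
      · -- inr j ∉ p'.support
        intro hmem
        rcases hsup _ hmem with ⟨a, _, hva⟩ | ⟨a, b, hab, habe, hva⟩
        · exact (inr_ne_inl hva).elim
        · have : j = pairIdx hn a b := inr_injective hva
          have : s(u, w) = s(a, b) := pairIdx_inj hn huw hab this
          rw [← this] at habe
          exact hW.2 (Walk.fst_mem_support_of_mem_edges p habe)
      · -- inl (castLE u) ∉ support (cons hadj2 p')
        rw [Walk.support_cons, List.mem_cons]
        rintro (h | h)
        · exact inl_ne_inr h
        · rcases hsup _ h with ⟨a, ha, hva⟩ | ⟨a, b, _, _, hva⟩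
          · have : u = a := Fin.castLE_injective hnN (inl_injective hva)
            exact hW.2 (this ▸ ha)
          · exact (inl_ne_inr hva).elim
    · -- support condition
      intro v' hv'
      rw [Walk.support_cons, Walk.support_cons, List.mem_cons, List.mem_cons] at hv'
      rcases hv' with h | h | h
      · exact Or.inl ⟨u, Walk.start_mem_support _, h⟩
      · exact Or.inr ⟨u, w, huw, by simp, h⟩
      · rcases hsup _ h with ⟨a, ha, hva⟩ | ⟨a, b, hab, habe, hva⟩
        · exact Or.inl ⟨a, by simp [ha], hva⟩
        · exact Or.inr ⟨a, b, hab, by simp [habe], hva⟩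
    · -- edge condition
      intro e' he'
      rw [Walk.edges_cons, Walk.edges_cons, List.mem_cons, List.mem_cons] at he'
      rcases he' with h | h | h
      · exact ⟨u, w, huw, by simp, Or.inl h⟩
      · refine ⟨u, w, huw, by simp, Or.inr ?_⟩
        rw [h, Sym2.eq_swap]
      · obtain ⟨a, b, hab, habe, hor⟩ := hedge _ h
        exact ⟨a, b, hab, by simp [habe], hor⟩

end Lift

section Extract

open SimpleGraph Walk Sum

variable {n : ℕ} (hn : 2 ≤ n) (hnN : n ≤ n * (n - 1) / 2)

local notation "K" => completeBipartiteGraph (Fin (n * (n - 1) / 2)) (Fin (n * (n - 1) / 2))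

/-- Extract a `K_n`-walk from a `K_{N,N}`-path all of whose edges are in `M`. -/
lemma extract_walk (L : ℕ) : ∀ {x y : Fin n}
    {vx vy : Fin (n * (n - 1) / 2) ⊕ Fin (n * (n - 1) / 2)} (W : (K).Walk vx vy),
    vx = inl (Fin.castLE hnN x) → vy = inl (Fin.castLE hnN y) → W.length ≤ L →
    W.IsPath →
    (∀ e' ∈ W.edges, ∃ a b : Fin (n * (n - 1) / 2),
      e' = s(inl a, inr b) ∧ ((a, b) : _ × _) ∈ Mset n) →
    ∃ W' : (⊤ : SimpleGraph (Fin n)).Walk x y,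
      ∀ ε ∈ W'.edges, ∃ c d : Fin n, c ≠ d ∧ ε = s(c, d) ∧
        s(inl (Fin.castLE hnN c), inr (pairIdx hn c d)) ∈ W.edges ∧
        s(inl (Fin.castLE hnN d), inr (pairIdx hn c d)) ∈ W.edges := by
  induction L with
  | zero =>
    intro x y vx vy W hvx hvy hlen _ _
    have h0 : W.length = 0 := by omega
    have := Walk.eq_of_length_eq_zero h0
    subst this; subst hvx
    have hxy : x = y := Fin.castLE_injective hnN (inl_injective hvy)
    subst hxy
    exact ⟨Walk.nil, by simp⟩
  | succ L ih =>
    intro x y vx vy W hvx hvy hlen hpath hedges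
    cases W with
    | nil =>
      subst hvx
      have hxy : x = y := Fin.castLE_injective hnN (inl_injective hvy)
      subst hxy
      exact ⟨Walk.nil, by simp⟩
    | @cons _ z _ hadj W2 =>
      subst hvx; subst hvy
      -- first edge
      obtain ⟨a1, b1, he1, hm1⟩ := hedges _ (List.mem_cons_self)
      have he1' : s((inl (Fin.castLE hnN x) : Fin (n * (n - 1) / 2) ⊕ Fin (n * (n - 1) / 2)), z) = s(inl a1, inr b1) := he1
      rw [Sym2.eq_iff] at he1'
      rcases he1' with ⟨hxa, hzb⟩ | ⟨hxb, hza⟩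
      · subst hzb
        cases W2 with
        | @cons _ z2 _ hadj2 W3 =>
          obtain ⟨a2, b2, he2, hm2⟩ := hedges _
            (List.mem_cons_of_mem _ (List.mem_cons_self))
          have he2' : s((inr b1 : Fin (n * (n - 1) / 2) ⊕ Fin (n * (n - 1) / 2)), z2) = s(inl a2, inr b2) := he2
          rw [Sym2.eq_iff] at he2'
          rcases he2' with ⟨hba, hz2b⟩ | ⟨hbb, hz2a⟩
          · exact absurd hba inr_ne_inl
          · subst hz2a
            have hbb' : b2 = b1 := (inr_injective hbb).symm
            subst hbb'
            have hxa' : Fin.castLE hnN x = a1 := inl_injective hxa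
            have hne : a1 ≠ a2 := by
              intro hc
              rw [Walk.cons_isPath_iff] at hpath
              apply hpath.2
              rw [hxa', hc, Walk.support_cons]
              exact List.mem_cons_of_mem _ (Walk.start_mem_support _)
            obtain ⟨u', v', hu', hv', huv', hjj⟩ := Mset_unique hn hnN hm1 hm2 hne
            have hxu : u' = x := Fin.castLE_injective hnN (by rw [← hu', ← hxa'])
            subst hxu
            have hpath3 : W3.IsPath := (hpath.of_cons).of_cons
            have hW3 : ∀ e' ∈ W3.edges, ∃ a b : Fin (n * (n - 1) / 2),
                e' = s(inl a, inr b) ∧ ((a, b) : _ × _) ∈ Mset n := fun e' he' =>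
              hedges _ (List.mem_cons_of_mem _ (List.mem_cons_of_mem _ he'))
            have hlen3 : W3.length ≤ L := by
              rw [Walk.length_cons, Walk.length_cons] at hlen; omega
            obtain ⟨W'', hW''⟩ := ih W3 (by rw [hv']) rfl hlen3 hpath3 hW3
            have hadjtop : (⊤ : SimpleGraph (Fin n)).Adj u' v' := by
              rw [SimpleGraph.top_adj]; exact huv'
            refine ⟨Walk.cons hadjtop W'', ?_⟩
            intro ε hε
            rw [Walk.edges_cons, List.mem_cons] at hε
            rcases hε with h | h
            · refine ⟨u', v', huv', h, ?_, ?_⟩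
              · rw [← hjj]
                exact List.mem_cons_self
              · rw [← hjj, ← hv']
                have hsw : s((inl a2 : Fin (n * (n - 1) / 2) ⊕ Fin (n * (n - 1) / 2)), inr b2) = s(inr b2, inl a2) := Sym2.eq_swap
                rw [hsw]
                exact List.mem_cons_of_mem _ (List.mem_cons_self)
            · obtain ⟨c, d, hcd, hεcd, hc1, hc2⟩ := hW'' _ h
              exact ⟨c, d, hcd, hεcd,
                List.mem_cons_of_mem _ (List.mem_cons_of_mem _ hc1),
                List.mem_cons_of_mem _ (List.mem_cons_of_mem _ hc2)⟩
      · exact absurd hxb inl_ne_inr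

end Extract

section Normalize

open SimpleGraph Walk

variable {V : Type*} {κ : Type*} {G : SimpleGraph V} {f : κ → V × V}

/-- One improvement step: if some marked demand is not realized by its own edge, the number of
such demands can be decreased. -/
lemma improve_step [DecidableEq κ] (S : Finset κ)
    (hinj : ∀ p ∈ S, ∀ q ∈ S, s((f p).1, (f p).2) = s((f q).1, (f q).2) → p = q)
    (hadj : ∀ p ∈ S, G.Adj (f p).1 (f p).2)
    (P : ∀ j : κ, G.Walk (f j).1 (f j).2)
    (hpath : ∀ j, (P j).IsPath)
    (hdisj : ∀ i j, i ≠ j → ∀ e, e ∈ (P i).edges → e ∉ (P j).edges)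
    (p0 : κ) (hp0 : p0 ∈ S) (hbad : (P p0).length ≠ 1) :
    ∃ P' : ∀ j : κ, G.Walk (f j).1 (f j).2,
      (∀ j, (P' j).IsPath) ∧
      (∀ i j, i ≠ j → ∀ e, e ∈ (P' i).edges → e ∉ (P' j).edges) ∧
      (∀ p ∈ S, (P' p).length ≠ 1 → (P p).length ≠ 1 ∧ p ≠ p0) := by
  classical
  set ε : Sym2 V := s((f p0).1, (f p0).2) with hε
  have hadj0 : G.Adj (f p0).1 (f p0).2 := hadj p0 hp0
  have hsingle : G.Walk (f p0).1 (f p0).2 := Walk.cons hadj0 Walk.nil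
  set single : G.Walk (f p0).1 (f p0).2 := Walk.cons hadj0 Walk.nil with hsdef
  have hsinglepath : single.IsPath := by
    rw [hsdef, Walk.cons_isPath_iff]
    refine ⟨Walk.IsPath.nil, ?_⟩
    simp [hadj0.ne]
  have hsingleedges : single.edges = [ε] := by simp [hsdef, hε]
  have hsinglelen : single.length = 1 := by simp [hsdef]
  have hεQ : ε ∉ (P p0).edges := fun hc => hbad (path_length_one_of_mem_edges _ (hpath _) hc)
  by_cases hex : ∃ j, ε ∈ (P j).edges
  · -- case B : own edge used by some other path
    obtain ⟨j0, hj0⟩ := hex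
    have hj0ne : j0 ≠ p0 := fun hc => hεQ (hc ▸ hj0)
    obtain ⟨W1, hW1⟩ := walk_subst (P p0) (P j0)
    set W'' := W1.bypass with hW''def
    have hW''path : W''.IsPath := Walk.bypass_isPath _
    have hW''edges : ∀ e ∈ W''.edges, (e ∈ (P j0).edges ∧ e ≠ ε) ∨ e ∈ (P p0).edges :=
      fun e he => hW1 e (Walk.edges_bypass_subset _ he)
    refine ⟨fun j => if h : j = p0 then (single.copy (by rw [h]) (by rw [h]))
      else if h' : j = j0 then (W''.copy (by rw [h']) (by rw [h'])) else P j, ?_, ?_, ?_⟩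
    · intro j
      by_cases h : j = p0
      · simp only [dif_pos h]; exact (Walk.isPath_copy _ _ _).mpr hsinglepath
      · by_cases h' : j = j0
        · simp only [dif_neg h, dif_pos h']; exact (Walk.isPath_copy _ _ _).mpr hW''path
        · simp only [dif_neg h, dif_neg h']; exact hpath j
    · have hmem : ∀ j e, (e ∈ (if h : j = p0 then (single.copy (by rw [h]) (by rw [h]))
          else if h' : j = j0 then (W''.copy (by rw [h']) (by rw [h'])) else P j).edges) →
          (j = p0 ∧ e = ε) ∨
          (j = j0 ∧ ((e ∈ (P j0).edges ∧ e ≠ ε) ∨ e ∈ (P p0).edges)) ∨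
          (j ≠ p0 ∧ j ≠ j0 ∧ e ∈ (P j).edges) := by
        intro j e he
        by_cases h : j = p0
        · rw [dif_pos h, Walk.edges_copy, hsingleedges, List.mem_singleton] at he
          exact Or.inl ⟨h, he⟩
        · by_cases h' : j = j0
          · rw [dif_neg h, dif_pos h', Walk.edges_copy] at he
            exact Or.inr (Or.inl ⟨h', hW''edges e he⟩)
          · rw [dif_neg h, dif_neg h'] at he
            exact Or.inr (Or.inr ⟨h, h', he⟩)
      intro i j hne e hei hej
      rcases hmem i e hei with ⟨hi, hie⟩ | ⟨hi, hie⟩ | ⟨hi1, hi2, hie⟩ <;>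
        rcases hmem j e hej with ⟨hj, hje⟩ | ⟨hj, hje⟩ | ⟨hj1, hj2, hje⟩
      · exact hne (hi.trans hj.symm)
      · subst hie
        rcases hje with ⟨-, hne'⟩ | hje
        · exact hne' rfl
        · exact hεQ hje
      · subst hie
        exact hdisj j0 j (fun hc => hj2 hc.symm) ε hj0 hje
      · subst hje
        rcases hie with ⟨-, hne'⟩ | hie
        · exact hne' rfl
        · exact hεQ hie
      · exact hne (hi.trans hj.symm)
      · rcases hie with ⟨hie, -⟩ | hie
        · exact hdisj j0 j (fun hc => hj2 hc.symm) e (hi ▸ hie) hje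
        · exact hdisj p0 j (fun hc => hj1 hc.symm) e hie hje
      · subst hje
        exact hdisj j0 i (fun hc => hi2 hc.symm) ε hj0 hie
      · rcases hje with ⟨hje, -⟩ | hje
        · exact hdisj i j0 hi2 e hie (hj ▸ hje)
        · exact hdisj i p0 hi1 e hie hje
      · exact hdisj i j hne e hie hje
    · intro p hpS hplen
      by_cases h : p = p0
      · exfalso
        apply hplen
        simp only [dif_pos h, Walk.length_copy]
        exact hsinglelen
      · refine ⟨?_, h⟩
        by_cases h' : p = j0
        · intro hlen1
          have hedges : (P p).edges = [s((f p).1, (f p).2)] := edges_of_length_one_s16 hlen1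
          have : ε ∈ (P p).edges := by rw [h']; exact hj0
          rw [hedges, List.mem_singleton] at this
          exact hj0ne ((hinj p0 hp0 p hpS this).trans h').symm
        · intro hlen1
          apply hplen
          simp only [dif_neg h, dif_neg h']
          exact hlen1
  · -- case A : own edge unused
    push_neg at hex
    refine ⟨fun j => if h : j = p0 then (single.copy (by rw [h]) (by rw [h])) else P j,
      ?_, ?_, ?_⟩
    · intro j
      by_cases h : j = p0
      · simp only [dif_pos h]; exact (Walk.isPath_copy _ _ _).mpr hsinglepath
      · simp only [dif_neg h]; exact hpath j
    · have hmem : ∀ j e, (e ∈ (if h : j = p0 then (single.copy (by rw [h]) (by rw [h]))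
          else P j).edges) → (j = p0 ∧ e = ε) ∨ (j ≠ p0 ∧ e ∈ (P j).edges) := by
        intro j e he
        by_cases h : j = p0
        · rw [dif_pos h, Walk.edges_copy, hsingleedges, List.mem_singleton] at he
          exact Or.inl ⟨h, he⟩
        · rw [dif_neg h] at he
          exact Or.inr ⟨h, he⟩
      intro i j hne e hei hej
      rcases hmem i e hei with ⟨hi, hie⟩ | ⟨hi, hie⟩ <;>
        rcases hmem j e hej with ⟨hj, hje⟩ | ⟨hj, hje⟩
      · exact hne (hi.trans hj.symm)
      · exact hex j (hie ▸ hje)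
      · exact hex i (hje ▸ hie)
      · exact hdisj i j hne e hie hje
    · intro p hpS hplen
      by_cases h : p = p0
      · exfalso
        apply hplen
        simp only [dif_pos h, Walk.length_copy]
        exact hsinglelen
      · refine ⟨?_, h⟩
        intro hlen1
        apply hplen
        simp only [dif_neg h]
        exact hlen1

end Normalize

section NormalizeAll

open SimpleGraph Walk

variable {V : Type*} {κ : Type*} {G : SimpleGraph V} {f : κ → V × V}

lemma normalize_real (S : Finset κ)
    (hinj : ∀ p ∈ S, ∀ q ∈ S, s((f p).1, (f p).2) = s((f q).1, (f q).2) → p = q)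
    (hadj : ∀ p ∈ S, G.Adj (f p).1 (f p).2)
    (P : ∀ j : κ, G.Walk (f j).1 (f j).2)
    (hpath : ∀ j, (P j).IsPath)
    (hdisj : ∀ i j, i ≠ j → ∀ e, e ∈ (P i).edges → e ∉ (P j).edges) :
    ∃ P' : ∀ j : κ, G.Walk (f j).1 (f j).2,
      (∀ j, (P' j).IsPath) ∧
      (∀ i j, i ≠ j → ∀ e, e ∈ (P' i).edges → e ∉ (P' j).edges) ∧
      (∀ p ∈ S, (P' p).length = 1) := by
  classical
  suffices h : ∀ (m : ℕ) (P : ∀ j : κ, G.Walk (f j).1 (f j).2),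
      (∀ j, (P j).IsPath) →
      (∀ i j, i ≠ j → ∀ e, e ∈ (P i).edges → e ∉ (P j).edges) →
      (S.filter (fun p => (P p).length ≠ 1)).card ≤ m →
      ∃ P' : ∀ j : κ, G.Walk (f j).1 (f j).2,
        (∀ j, (P' j).IsPath) ∧
        (∀ i j, i ≠ j → ∀ e, e ∈ (P' i).edges → e ∉ (P' j).edges) ∧
        (∀ p ∈ S, (P' p).length = 1) by
    exact h _ P hpath hdisj le_rfl
  intro m
  induction m with
  | zero =>
    intro P hpath hdisj hcard
    refine ⟨P, hpath, hdisj, ?_⟩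
    intro p hpS
    by_contra hbad
    have : p ∈ S.filter (fun p => (P p).length ≠ 1) := Finset.mem_filter.mpr ⟨hpS, hbad⟩
    have := Finset.card_pos.mpr ⟨p, this⟩
    omega
  | succ m ih =>
    intro P hpath hdisj hcard
    by_cases hempty : ∀ p ∈ S, (P p).length = 1
    · exact ⟨P, hpath, hdisj, hempty⟩
    · push_neg at hempty
      obtain ⟨p0, hp0S, hbad⟩ := hempty
      obtain ⟨P', hpath', hdisj', hbadsub⟩ :=
        improve_step S hinj hadj P hpath hdisj p0 hp0S hbad
      apply ih P' hpath' hdisj'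
      have hsub : S.filter (fun p => (P' p).length ≠ 1) ⊆
          (S.filter (fun p => (P p).length ≠ 1)).erase p0 := by
        intro p hp
        rw [Finset.mem_filter] at hp
        obtain ⟨h1, h2⟩ := hbadsub p hp.1 hp.2
        rw [Finset.mem_erase, Finset.mem_filter]
        exact ⟨h2, hp.1, h1⟩
      have hc1 : ((S.filter (fun p => (P p).length ≠ 1)).erase p0).card <
          (S.filter (fun p => (P p).length ≠ 1)).card := by
        apply Finset.card_erase_lt_of_mem
        exact Finset.mem_filter.mpr ⟨hp0S, hbad⟩
      have := Finset.card_le_card hsub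
      omega

end NormalizeAll


lemma sym2_mixed_eq {α β : Type*} {a a' : α} {b b' : β} :
    s((Sum.inl a : α ⊕ β), Sum.inr b) = s(Sum.inl a', Sum.inr b') ↔ a = a' ∧ b = b' := by
  rw [Sym2.eq_iff]
  constructor
  · rintro (⟨h1, h2⟩ | ⟨h1, h2⟩)
    · exact ⟨Sum.inl_injective h1, Sum.inr_injective h2⟩
    · exact absurd h1 Sum.inl_ne_inr
  · rintro ⟨rfl, rfl⟩
    exact Or.inl ⟨rfl, rfl⟩

/-- Reduction of the edge-disjoint paths problem on `K_n` to `K_{N,N}`, `N = n(n-1)/2`: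
a demand graph `D` on the vertex set of `K_n` is realizable in `K_n` if and only if the
demand graph `D'` with `E(D') = E(D) ∪ (E(K_{N,N}) \ M)` is realizable in `K_{N,N}`
(the vertices of `K_n` being identified with the first `n` vertices of color class `A`). -/
theorem realizable_Kn_iff_realizable_KNN (n : ℕ) (hn : 2 ≤ n)
    (hnN : n ≤ n * (n - 1) / 2) (ι : Type) [Fintype ι]
    (g : ι → Fin n × Fin n) (hloopless : ∀ i, (g i).1 ≠ (g i).2) :
    IsRealizable (⊤ : SimpleGraph (Fin n)) g ↔
      IsRealizable
        (completeBipartiteGraph (Fin (n * (n - 1) / 2)) (Fin (n * (n - 1) / 2)))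
        (Sum.elim
          (fun i : ι =>
            ((Sum.inl (Fin.castLE hnN (g i).1) :
                Fin (n * (n - 1) / 2) ⊕ Fin (n * (n - 1) / 2)),
             (Sum.inl (Fin.castLE hnN (g i).2) :
                Fin (n * (n - 1) / 2) ⊕ Fin (n * (n - 1) / 2))))
          (fun p : {p : Fin (n * (n - 1) / 2) × Fin (n * (n - 1) / 2) // p ∉ Mset n} =>
            ((Sum.inl p.1.1 : Fin (n * (n - 1) / 2) ⊕ Fin (n * (n - 1) / 2)),
             (Sum.inr p.1.2 : Fin (n * (n - 1) / 2) ⊕ Fin (n * (n - 1) / 2))))) := by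
  classical
  open SimpleGraph Walk Sum in
  constructor
  · rintro ⟨P, hPpath, hPdisj⟩
    choose W' hW'path hW'sup hW'edge using fun i : ι => lift_walk hn hnN (P i) (hPpath i)
    refine ⟨Sum.rec (fun i => W' i)
      (fun p => Walk.cons (by simp) Walk.nil), ?_, ?_⟩
    · intro j
      cases j with
      | inl i => exact hW'path i
      | inr p =>
        exact (Walk.cons_isPath_iff _ _).mpr ⟨Walk.IsPath.nil, by simp⟩
    · intro j1 j2 hne e he1 he2
      cases j1 with
      | inl i1 =>
        obtain ⟨a, b, hab, habe, hor⟩ := hW'edge i1 e he1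
        cases j2 with
        | inl i2 =>
          obtain ⟨a', b', hab', habe', hor'⟩ := hW'edge i2 e he2
          have hne' : i1 ≠ i2 := fun hc => hne (congrArg Sum.inl hc)
          have hpp : pairIdx hn a b = pairIdx hn a' b' := by
            rcases hor with h | h <;> rcases hor' with h' | h' <;>
              · rw [h] at h'
                exact (sym2_mixed_eq.mp h').2
          have : s(a, b) = s(a', b') := pairIdx_inj hn hab hab' hpp
          rw [← this] at habe'
          exact hPdisj i1 i2 hne' _ habe habe'
        | inr p =>
          have he2' : e = s(inl p.1.1, inr p.1.2) := by
            simpa using he2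
          apply p.2
          rcases hor with h | h
          · rw [h] at he2'
            obtain ⟨h1, h2⟩ := sym2_mixed_eq.mp he2'.symm
            have := pairIdx_mem_Mset hn hnN hab
            rw [← h1, ← h2] at this
            exact this
          · rw [h] at he2'
            obtain ⟨h1, h2⟩ := sym2_mixed_eq.mp he2'.symm
            have := pairIdx_mem_Mset hn hnN (Ne.symm hab)
            rw [pairIdx_symm hn b a] at this
            rw [← h1, ← h2] at this
            exact this
      | inr p =>
        have he1' : e = s(inl p.1.1, inr p.1.2) := by
          simpa using he1
        cases j2 with
        | inl i2 =>
          obtain ⟨a, b, hab, habe, hor⟩ := hW'edge i2 e he2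
          apply p.2
          rcases hor with h | h
          · rw [h] at he1'
            obtain ⟨h1, h2⟩ := sym2_mixed_eq.mp he1'
            have := pairIdx_mem_Mset hn hnN hab
            rw [h1, h2] at this
            exact this
          · rw [h] at he1'
            obtain ⟨h1, h2⟩ := sym2_mixed_eq.mp he1'
            have := pairIdx_mem_Mset hn hnN (Ne.symm hab)
            rw [pairIdx_symm hn b a] at this
            rw [h1, h2] at this
            exact this
        | inr p' =>
          have he2' : e = s(inl p'.1.1, inr p'.1.2) := by
            simpa using he2
          rw [he1'] at he2'
          obtain ⟨h1, h2⟩ := sym2_mixed_eq.mp he2'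
          apply hne
          congr 1
          apply Subtype.ext
          exact Prod.ext h1 h2
  · rintro ⟨P, hPpath, hPdisj⟩
    set κ := ι ⊕ {p : Fin (n * (n - 1) / 2) × Fin (n * (n - 1) / 2) // p ∉ Mset n} with hκ
    haveI : Fintype {p : Fin (n * (n - 1) / 2) × Fin (n * (n - 1) / 2) // p ∉ Mset n} :=
      Fintype.ofFinite _
    set S : Finset κ := Finset.image Sum.inr Finset.univ with hS
    obtain ⟨P', hP'path, hP'disj, hP'len⟩ := normalize_real S
      (by
        intro p hp q hq heq
        rw [hS, Finset.mem_image] at hp hq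
        obtain ⟨pp, -, rfl⟩ := hp
        obtain ⟨qq, -, rfl⟩ := hq
        obtain ⟨h1, h2⟩ := sym2_mixed_eq.mp heq
        congr 1
        exact Subtype.ext (Prod.ext h1 h2))
      (by
        intro p hp
        rw [hS, Finset.mem_image] at hp
        obtain ⟨pp, -, rfl⟩ := hp
        simp)
      P hPpath hPdisj
    have hMedges : ∀ i : ι, ∀ e ∈ (P' (Sum.inl i)).edges,
        ∃ a b : Fin (n * (n - 1) / 2), e = s(inl a, inr b) ∧ ((a, b) : _ × _) ∈ Mset n := by
      intro i e he
      have hadj : ∀ v1 v2 : Fin (n * (n - 1) / 2) ⊕ Fin (n * (n - 1) / 2),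
          s(v1, v2) ∈ (P' (Sum.inl i)).edges → ∃ a b : Fin (n * (n - 1) / 2),
          s(v1, v2) = s(inl a, inr b) ∧ ((a, b) : _ × _) ∈ Mset n := by
        intro v1 v2 hmem
        have hadj12 := Walk.adj_of_mem_edges _ hmem
        have key : ∀ a b : Fin (n * (n - 1) / 2), s(v1, v2) = s(inl a, inr b) →
            ∃ a' b' : Fin (n * (n - 1) / 2),
            s(v1, v2) = s(inl a', inr b') ∧ ((a', b') : _ × _) ∈ Mset n := by
          intro a b heq
          by_cases hm : ((a, b) : _ × _) ∈ Mset n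
          · exact ⟨a, b, heq, hm⟩
          · exfalso
            set pp : {p : Fin (n * (n - 1) / 2) × Fin (n * (n - 1) / 2) // p ∉ Mset n} :=
              ⟨(a, b), hm⟩ with hpp
            have hlen : (P' (Sum.inr pp)).length = 1 :=
              hP'len _ (Finset.mem_image.mpr ⟨pp, Finset.mem_univ _, rfl⟩)
            have hedges1 : (P' (Sum.inr pp)).edges = [s(inl a, inr b)] :=
              edges_of_length_one_s16 hlen
            have : s(v1, v2) ∈ (P' (Sum.inr pp)).edges := by
              rw [hedges1, heq]; exact List.mem_cons_self
            exact hP'disj (Sum.inl i) (Sum.inr pp) (by simp) _ hmem this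
        cases v1 with
        | inl a =>
          cases v2 with
          | inl a' => simp at hadj12
          | inr b => exact key a b rfl
        | inr b =>
          cases v2 with
          | inl a =>
            have hsw : s((inr b : Fin (n * (n - 1) / 2) ⊕ Fin (n * (n - 1) / 2)), inl a)
                = s(inl a, inr b) := Sym2.eq_swap
            exact key a b hsw
          | inr b' => simp at hadj12
      induction e using Sym2.ind with
      | _ v1 v2 => exact hadj v1 v2 he
    choose W' hW' using fun i : ι =>
      extract_walk hn hnN ((P' (Sum.inl i)).length) (P' (Sum.inl i)) rfl rfl le_rfl
        (hP'path _) (hMedges i)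
    refine ⟨fun i => (W' i).bypass, fun i => Walk.bypass_isPath _, ?_⟩
    intro i1 i2 hne ε hε1 hε2
    obtain ⟨c, d, hcd, hεcd, h1, h2⟩ := hW' i1 ε (Walk.edges_bypass_subset _ hε1)
    obtain ⟨c', d', hcd', hεcd', h1', h2'⟩ := hW' i2 ε (Walk.edges_bypass_subset _ hε2)
    have hne' : Sum.inl i1 ≠ (Sum.inl i2 : κ) := fun hc => hne (Sum.inl_injective hc)
    rw [hεcd] at hεcd'
    rw [Sym2.eq_iff] at hεcd'
    rcases hεcd' with ⟨hc1, hd1⟩ | ⟨hc1, hd1⟩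
    · rw [← hc1, ← hd1] at h1'
      exact hP'disj _ _ hne' _ h1 h1'
    · rw [← hd1, ← hc1] at h2'
      rw [pairIdx_symm hn d c] at h2'
      exact hP'disj _ _ hne' _ h1 h2'
end
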